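/- arXiv:0903.0910 — 6 statements merged into one kernel-verified Lean document; each statement's English description precedes it below -/
import Mathlib

section
/- (Reverse Taylor formula.) Let N ≥ 1 be an integer, X and Y independent real random variables with E[|Y|^N] < ∞, and f an N-times differentiable function such that f^{(k)}(X) and f^{(k)}(X+Y) are integrable for all k = 0,…,N. Define m_Y^{(k)} = E[Y^k]/k!, and for a tuple J = (j_1,…,j_d) of positive integers set |J| = j_1+⋯+j_d and m_Y^{(J)} = m_Y^{(j_1)}⋯m_Y^{(j_d)} (with m_Y^{(∅)} = 1). Define δ_M(g, X, Y) = E[g(X+Y)] − Σ_{k=0}^{M} m_Y^{(k)} E[g^{(k)}(X)]. Then E[f(X)] = Σ_{d ≥ 0} (−1)^d Σ_{J ∈ ℕ_*^d, |J| ≤ N} m_Y^{(J)} E[f^{(|J|)}(X+Y)] + ε_N(f, X, Y), where ε_N(f, X, Y) = − Σ_{d ≥ 0} (−1)^d Σ_{J ∈ ℕ_*^d, |J| ≤ N} m_Y^{(J)} δ_{N−|J|}(f^{(|J|)}, X, Y). -/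
open MeasureTheory ProbabilityTheory Finset

/-- Normalized moment `m_Y^{(k)} = E[Y^k]/k!`. -/
noncomputable def momNorm {Ω : Type*} [MeasureSpace Ω] (Y : Ω → ℝ) (k : ℕ) : ℝ :=
  (∫ ω, (Y ω) ^ k) / (Nat.factorial k)

/-- The finite set of tuples `J ∈ ℕ_*^d` with `|J| ≤ N`. -/
def tuples (N d : ℕ) : Finset (Fin d → ℕ) :=
  (Fintype.piFinset fun _ => Finset.Icc 1 N).filter fun J => ∑ i, J i ≤ N

/-- Taylor remainder `δ_M(g,X,Y) = E[g(X+Y)] − Σ_{k=0}^M m_Y^{(k)} E[g^{(k)}(X)]`. -/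
noncomputable def taylorRem {Ω : Type*} [MeasureSpace Ω] (X Y : Ω → ℝ) (M : ℕ)
    (g : ℝ → ℝ) : ℝ :=
  (∫ ω, g (X ω + Y ω)) -
    ∑ k ∈ Finset.range (M + 1), momNorm Y k * ∫ ω, iteratedDeriv k g (X ω)

lemma iter_iter (f : ℝ → ℝ) (n k : ℕ) :
    iteratedDeriv k (iteratedDeriv n f) = iteratedDeriv (n + k) f := by
  induction k with
  | zero => simp
  | succ k ih => rw [iteratedDeriv_succ, ih, ← iteratedDeriv_succ]; ring_nf
lemma mem_tuples {N d : ℕ} {J : Fin d → ℕ} :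
    J ∈ tuples N d ↔ (∀ i, 1 ≤ J i ∧ J i ≤ N) ∧ ∑ i, J i ≤ N := by
  simp [tuples, Finset.mem_filter, Fintype.mem_piFinset, Finset.mem_Icc]

lemma key (N d : ℕ) (m : ℕ → ℝ) (A : ℕ → ℝ) :
    ∑ J ∈ tuples N d, ∑ k ∈ Finset.range (N - ∑ i, J i),
      ((∏ i, m (J i)) * m (k+1) * A ((∑ i, J i) + (k+1))) =
    ∑ J ∈ tuples N (d+1), (∏ i, m (J i)) * A (∑ i, J i) := by
  rw [Finset.sum_sigma']
  refine Finset.sum_bij' (fun p _ => Fin.snoc p.1 (p.2+1))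
    (fun J _ => ⟨Fin.init J, J (Fin.last d) - 1⟩) ?_ ?_ ?_ ?_ ?_
  · rintro ⟨J, k⟩ hp
    simp only [Finset.mem_sigma, Finset.mem_range] at hp
    obtain ⟨hJ, hk⟩ := hp
    rw [mem_tuples] at hJ ⊢
    have hs : ∑ i : Fin (d+1), Fin.snoc J (k+1) i = (∑ i, J i) + (k+1) := by
      rw [Fin.sum_univ_castSucc]; simp
    constructor
    · intro i
      refine Fin.lastCases ?_ ?_ i
      · simp only [Fin.snoc_last]; omega
      · intro j; simp only [Fin.snoc_castSucc]; exact hJ.1 j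
    · rw [hs]; omega
  · rintro J hJ
    rw [mem_tuples] at hJ
    simp only [Finset.mem_sigma, Finset.mem_range]
    have hs : ∑ i : Fin (d+1), J i = (∑ i, Fin.init J i) + J (Fin.last d) := by
      rw [Fin.sum_univ_castSucc]; rfl
    have h1 := hJ.1 (Fin.last d)
    constructor
    · rw [mem_tuples]
      exact ⟨fun i => hJ.1 i.castSucc, by omega⟩
    · omega
  · rintro ⟨J, k⟩ hp
    simp [Fin.init_snoc]
  · rintro J hJ
    rw [mem_tuples] at hJ
    have h1 := (hJ.1 (Fin.last d)).1
    simp only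
    rw [Nat.sub_add_cancel h1]
    exact Fin.snoc_init_self J
  · rintro ⟨J, k⟩ hp
    simp only
    have hs : ∑ i : Fin (d+1), Fin.snoc J (k+1) i = (∑ i, J i) + (k+1) := by
      rw [Fin.sum_univ_castSucc]; simp
    rw [hs]
    congr 1
    rw [Fin.prod_univ_castSucc]
    simp

/-- **Reverse Taylor formula.** For independent `X, Y` with `E[|Y|^N] < ∞` and an
`N`-times differentiable `f` with the relevant integrabilities,
`E[f(X)] = Σ_{d≥0} (−1)^d Σ_{J ∈ ℕ_*^d, |J| ≤ N} m_Y^{(J)} E[f^{(|J|)}(X+Y)] + ε_N(f,X,Y)`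
with `ε_N(f,X,Y) = − Σ_{d≥0} (−1)^d Σ_{J, |J| ≤ N} m_Y^{(J)} δ_{N−|J|}(f^{(|J|)},X,Y)`. -/
theorem stmt_1 {Ω : Type*} [MeasureSpace Ω] [IsProbabilityMeasure (ℙ : Measure Ω)]
    (X Y : Ω → ℝ) (hX : Measurable X) (hY : Measurable Y)
    (hindep : IndepFun X Y (ℙ : Measure Ω))
    (N : ℕ) (hN : 1 ≤ N)
    (hYmom : Integrable fun ω => |Y ω| ^ N)
    (f : ℝ → ℝ)
    (hdiff : ∀ k < N, Differentiable ℝ (iteratedDeriv k f))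
    (hint : ∀ k ≤ N, Integrable (fun ω => iteratedDeriv k f (X ω)) ∧
      Integrable (fun ω => iteratedDeriv k f (X ω + Y ω))) :
    (∫ ω, f (X ω)) =
      (∑ d ∈ Finset.range (N + 1), (-1 : ℝ) ^ d *
        ∑ J ∈ tuples N d, (∏ i, momNorm Y (J i)) *
          ∫ ω, iteratedDeriv (∑ i, J i) f (X ω + Y ω)) +
      (- ∑ d ∈ Finset.range (N + 1), (-1 : ℝ) ^ d *
        ∑ J ∈ tuples N d, (∏ i, momNorm Y (J i)) *
          taylorRem X Y (N - ∑ i, J i) (iteratedDeriv (∑ i, J i) f)) := by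
  have hm0 : momNorm Y 0 = 1 := by simp [momNorm]
  set m : ℕ → ℝ := momNorm Y with hm
  set A : ℕ → ℝ := fun n => ∫ ω, iteratedDeriv n f (X ω) with hA
  set B : ℕ → ℝ := fun n => ∫ ω, iteratedDeriv n f (X ω + Y ω) with hB
  set T : ℕ → ℝ := fun d => ∑ J ∈ tuples N d, (∏ i, m (J i)) * A (∑ i, J i) with hT
  -- rewrite the remainder
  have hrem : ∀ n, B n - taylorRem X Y (N - n) (iteratedDeriv n f)
      = A n + ∑ k ∈ Finset.range (N - n), m (k+1) * A (n + (k+1)) := by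
    intro n
    have : taylorRem X Y (N - n) (iteratedDeriv n f)
        = B n - ∑ k ∈ Finset.range (N - n + 1), m k * A (n + k) := by
      unfold taylorRem
      congr 1
      refine Finset.sum_congr rfl fun k _ => ?_
      rw [iter_iter]
    rw [this, sub_sub_cancel, Finset.sum_range_succ']
    simp [hm0]
    ring
  -- telescoping
  have hkey : ∀ d, ∑ J ∈ tuples N d, (∏ i, m (J i)) *
      (B (∑ i, J i) - taylorRem X Y (N - ∑ i, J i) (iteratedDeriv (∑ i, J i) f))
      = T d + T (d+1) := by
    intro d
    simp only [hT]
    rw [← key N d m A]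
    rw [← Finset.sum_add_distrib]
    refine Finset.sum_congr rfl fun J _ => ?_
    rw [hrem, mul_add, Finset.mul_sum]
    congr 1
    refine Finset.sum_congr rfl fun k _ => ?_
    ring
  have hTop : T (N+1) = 0 := by
    have he : tuples N (N+1) = ∅ := by
      refine Finset.eq_empty_of_forall_notMem fun J hJ => ?_
      rw [mem_tuples] at hJ
      have h1 : ∀ i, 1 ≤ J i := fun i => (hJ.1 i).1
      have : (N+1 : ℕ) ≤ ∑ i, J i := by
        calc (N+1 : ℕ) = ∑ _i : Fin (N+1), 1 := by simp
        _ ≤ ∑ i, J i := Finset.sum_le_sum fun i _ => h1 i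
      omega
    simp [hT, he]
  have hT0 : T 0 = ∫ ω, f (X ω) := by
    have he : tuples N 0 = {(Fin.elim0 : Fin 0 → ℕ)} := by
      ext J
      simp [mem_tuples, Subsingleton.elim J (Fin.elim0 : Fin 0 → ℕ)]
    simp [hT, he, hA]
  rw [← sub_eq_add_neg, ← Finset.sum_sub_distrib]
  have : ∀ d ∈ Finset.range (N+1), (-1:ℝ)^d *
        (∑ J ∈ tuples N d, (∏ i, m (J i)) * B (∑ i, J i)) -
      (-1:ℝ)^d * (∑ J ∈ tuples N d, (∏ i, m (J i)) *
        taylorRem X Y (N - ∑ i, J i) (iteratedDeriv (∑ i, J i) f))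
      = (-1:ℝ)^d * T d - (-1:ℝ)^(d+1) * T (d+1) := by
    intro d _
    rw [← mul_sub, ← Finset.sum_sub_distrib]
    simp only [← mul_sub]
    rw [hkey d]
    ring
  rw [Finset.sum_congr rfl this, Finset.sum_range_sub' (fun d => (-1:ℝ)^d * T d)]
  rw [hTop, hT0]
  ring
end

section
/- Let f: ℝ → ℝ, α, β ∈ (0,1] with α ≤ β, and p ≥ 0. If ‖f‖_{β,p} < ∞ then ‖f‖_{α, p+β−α} < ∞, where ‖f‖_{α,p} = sup_{x ≠ y} |f(x) − f(y)| / (|x−y|^α (1 + |x|^p + |y|^p)). -/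
lemma auxA (a s t : ℝ) (ha : 0 ≤ a) (hs : 0 ≤ s) (hst : s ≤ t) :
    a ^ s ≤ 1 + a ^ t := by
  rcases le_or_gt a 1 with h1 | h1
  · have : a ^ s ≤ 1 := Real.rpow_le_one ha h1 hs
    have := Real.rpow_nonneg ha t
    linarith
  · have : a ^ s ≤ a ^ t := Real.rpow_le_rpow_of_exponent_le h1.le hst
    have h0 : (0:ℝ) ≤ a ^ s := Real.rpow_nonneg ha s
    linarith

lemma auxB (a b s u : ℝ) (ha : 0 ≤ a) (hb : 0 ≤ b) (hs : 0 ≤ s) (hu : 0 ≤ u) :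
    a ^ s * b ^ u ≤ 1 + a ^ (s + u) + b ^ (s + u) := by
  set m := max a b with hm
  have hma : a ≤ m := le_max_left a b
  have hmb : b ≤ m := le_max_right a b
  have hm0 : 0 ≤ m := le_trans ha hma
  have h1 : a ^ s * b ^ u ≤ m ^ s * m ^ u :=
    mul_le_mul (Real.rpow_le_rpow ha hma hs) (Real.rpow_le_rpow hb hmb hu)
      (Real.rpow_nonneg hb u) (Real.rpow_nonneg hm0 s)
  have h2 : m ^ s * m ^ u ≤ m ^ (s + u) := by
    rcases eq_or_lt_of_le hm0 with h0 | h0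
    · rcases eq_or_lt_of_le hs with hs0 | hs0
      · simp [← h0, ← hs0]
      · rw [← h0, Real.zero_rpow (ne_of_gt hs0)]
        simp [Real.rpow_nonneg]
    · rw [Real.rpow_add h0]
  have h3 : m ^ (s + u) ≤ a ^ (s + u) + b ^ (s + u) := by
    rcases max_choice a b with hc | hc <;> rw [hm, hc]
    · have := Real.rpow_nonneg hb (s + u); linarith
    · have := Real.rpow_nonneg ha (s + u); linarith
  linarith

/-- If `α ≤ β` and `‖f‖_{β,p} < ∞` then `‖f‖_{α,p+β−α} < ∞`. -/
theorem stmt_3 (f : ℝ → ℝ) (α β p : ℝ) (hα : α ∈ Set.Ioc (0:ℝ) 1)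
    (hβ : β ∈ Set.Ioc (0:ℝ) 1) (hαβ : α ≤ β) (hp : 0 ≤ p)
    (h : ∃ C : ℝ, ∀ x y : ℝ, x ≠ y →
      |f x - f y| ≤ C * |x - y| ^ β * (1 + |x| ^ p + |y| ^ p)) :
    ∃ C : ℝ, ∀ x y : ℝ, x ≠ y →
      |f x - f y| ≤ C * |x - y| ^ α * (1 + |x| ^ (p + β - α) + |y| ^ (p + β - α)) := by
  obtain ⟨C, hC⟩ := h
  refine ⟨24 * |C|, fun x y hxy => ?_⟩
  set q := p + β - α with hq
  set r := β - α with hr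
  have hr0 : 0 ≤ r := by simp [hr]; linarith
  have hr1 : r ≤ 1 := by have := hβ.2; have := hα.1; simp [hr]; linarith
  have hpq : p ≤ q := by simp [hq]; linarith
  have hrq : r ≤ q := by simp [hq, hr]; linarith
  have hq0 : 0 ≤ q := le_trans hp hpq
  have hd : 0 < |x - y| := abs_pos.mpr (sub_ne_zero.mpr hxy)
  set d := |x - y| with hdd
  have hx0 : (0:ℝ) ≤ |x| := abs_nonneg x
  have hy0 : (0:ℝ) ≤ |y| := abs_nonneg y
  set A := 1 + |x| ^ q + |y| ^ q with hA
  have hxq : (0:ℝ) ≤ |x| ^ q := Real.rpow_nonneg hx0 q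
  have hyq : (0:ℝ) ≤ |y| ^ q := Real.rpow_nonneg hy0 q
  have hA1 : 1 ≤ A := by simp [hA]; linarith
  have hxp : (0:ℝ) ≤ |x| ^ p := Real.rpow_nonneg hx0 p
  have hyp : (0:ℝ) ≤ |y| ^ p := Real.rpow_nonneg hy0 p
  -- central claim
  have claim : d ^ r * (1 + |x| ^ p + |y| ^ p) ≤ 24 * A := by
    rcases le_or_gt d 1 with h1 | h1
    · have hdr : d ^ r ≤ 1 := Real.rpow_le_one hd.le h1 hr0
      have e1 : |x| ^ p ≤ 1 + |x| ^ q := auxA _ _ _ hx0 hp hpq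
      have e2 : |y| ^ p ≤ 1 + |y| ^ q := auxA _ _ _ hy0 hp hpq
      have hP0 : (0:ℝ) ≤ 1 + |x| ^ p + |y| ^ p := by linarith
      have : d ^ r * (1 + |x| ^ p + |y| ^ p) ≤ 1 * (1 + |x| ^ p + |y| ^ p) :=
        mul_le_mul_of_nonneg_right hdr hP0
      nlinarith
    · have hle : d ≤ |x| + |y| := abs_sub x y
      have h2 : d ^ r ≤ (|x| + |y|) ^ r := Real.rpow_le_rpow hd.le hle hr0
      have h3 : (|x| + |y|) ^ r ≤ 2 * (|x| ^ r + |y| ^ r) := by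
        set m := max |x| |y| with hm
        have hm0 : 0 ≤ m := le_trans hx0 (le_max_left _ _)
        have hab : |x| + |y| ≤ 2 * m := by
          have := le_max_left |x| |y|; have := le_max_right |x| |y|; linarith
        have h4 : (|x| + |y|) ^ r ≤ (2 * m) ^ r :=
          Real.rpow_le_rpow (by linarith) hab hr0
        have h5 : (2 * m) ^ r = 2 ^ r * m ^ r := Real.mul_rpow (by norm_num) hm0
        have h6 : (2:ℝ) ^ r ≤ 2 := by
          calc (2:ℝ) ^ r ≤ 2 ^ (1:ℝ) := Real.rpow_le_rpow_of_exponent_le one_le_two hr1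
          _ = 2 := Real.rpow_one 2
        have h7 : m ^ r ≤ |x| ^ r + |y| ^ r := by
          rcases max_choice |x| |y| with hc | hc <;> rw [hm, hc]
          · have := Real.rpow_nonneg hy0 r; linarith
          · have := Real.rpow_nonneg hx0 r; linarith
        have hmr : 0 ≤ m ^ r := Real.rpow_nonneg hm0 r
        calc (|x| + |y|) ^ r ≤ 2 ^ r * m ^ r := by rw [← h5]; exact h4
          _ ≤ 2 * m ^ r := mul_le_mul_of_nonneg_right h6 hmr
          _ ≤ 2 * (|x| ^ r + |y| ^ r) := by linarith
      have hxr : (0:ℝ) ≤ |x| ^ r := Real.rpow_nonneg hx0 r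
      have hyr : (0:ℝ) ≤ |y| ^ r := Real.rpow_nonneg hy0 r
      have e1 : |x| ^ r ≤ 1 + |x| ^ q := auxA _ _ _ hx0 hr0 hrq
      have e2 : |y| ^ r ≤ 1 + |y| ^ q := auxA _ _ _ hy0 hr0 hrq
      have hrpq : r + p = q := by simp [hq, hr]; ring
      have e3 : |x| ^ r * |x| ^ p ≤ 1 + |x| ^ q + |x| ^ q := by
        have := auxB |x| |x| r p hx0 hx0 hr0 hp; rwa [hrpq] at this
      have e4 : |y| ^ r * |y| ^ p ≤ 1 + |y| ^ q + |y| ^ q := by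
        have := auxB |y| |y| r p hy0 hy0 hr0 hp; rwa [hrpq] at this
      have e5 : |x| ^ r * |y| ^ p ≤ 1 + |x| ^ q + |y| ^ q := by
        have := auxB |x| |y| r p hx0 hy0 hr0 hp; rwa [hrpq] at this
      have e6 : |y| ^ r * |x| ^ p ≤ 1 + |y| ^ q + |x| ^ q := by
        have := auxB |y| |x| r p hy0 hx0 hr0 hp; rwa [hrpq] at this
      have hP0 : (0:ℝ) ≤ 1 + |x| ^ p + |y| ^ p := by linarith
      calc d ^ r * (1 + |x| ^ p + |y| ^ p)
          ≤ 2 * (|x| ^ r + |y| ^ r) * (1 + |x| ^ p + |y| ^ p) :=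
            mul_le_mul_of_nonneg_right (le_trans h2 h3) hP0
        _ ≤ 24 * A := by simp only [hA]; nlinarith
  -- finish
  have key := hC x y hxy
  have hdβ : d ^ β = d ^ α * d ^ r := by
    rw [← Real.rpow_add hd]; congr 1; simp [hr]
  have hdα : (0:ℝ) ≤ d ^ α := Real.rpow_nonneg hd.le α
  have hdβ0 : (0:ℝ) ≤ d ^ β := Real.rpow_nonneg hd.le β
  have hP0 : (0:ℝ) ≤ 1 + |x| ^ p + |y| ^ p := by linarith
  calc |f x - f y| ≤ C * d ^ β * (1 + |x| ^ p + |y| ^ p) := key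
    _ ≤ |C| * d ^ β * (1 + |x| ^ p + |y| ^ p) := by
        apply mul_le_mul_of_nonneg_right _ hP0
        exact mul_le_mul_of_nonneg_right (le_abs_self C) hdβ0
    _ = |C| * d ^ α * (d ^ r * (1 + |x| ^ p + |y| ^ p)) := by rw [hdβ]; ring
    _ ≤ |C| * d ^ α * (24 * A) := by
        apply mul_le_mul_of_nonneg_left claim (by positivity)
    _ = 24 * |C| * d ^ α * A := by ring
end

section
/- Let X and X* be independent, with X of mean zero and variance σ² > 0 and X* having the zero biased distribution of X. Then for any α ∈ (0,1], E[|X − X*|^α] = E[|X^s|^{α+2}] / (2(α+1)σ²), where X^s = X − X̃ and X̃ is an independent copy of X. -/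
open MeasureTheory ProbabilityTheory Real Filter

section ZbHelpers

variable {α : ℝ}

private lemma zb_cont_absrpow {p : ℝ} (hp : 0 ≤ p) : Continuous (fun t : ℝ => |t| ^ p) :=
  continuous_abs.rpow_const (fun _ => Or.inr hp)

private lemma zb_hasDerivAt_mul_abs_rpow (hα : 0 < α) (t : ℝ) :
    HasDerivAt (fun t : ℝ => t * |t| ^ α) ((α + 1) * |t| ^ α) t := by
  rcases lt_trichotomy t 0 with ht | rfl | ht
  · have h1 : HasDerivAt (fun t : ℝ => -((-t) ^ (α + 1))) ((α + 1) * |t| ^ α) t := by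
      have h := ((Real.hasDerivAt_rpow_const (x := -t) (p := α + 1)
        (Or.inl (by linarith))).comp t (hasDerivAt_neg t)).neg
      have he : -((α + 1) * (-t) ^ (α + 1 - 1) * (-1)) = (α + 1) * |t| ^ α := by
        rw [abs_of_neg ht, add_sub_cancel_right]; ring
      rwa [he] at h
    refine h1.congr_of_eventuallyEq ?_
    filter_upwards [eventually_lt_nhds ht] with x hx
    rw [abs_of_neg hx, Real.rpow_add_one (by linarith : (-x) ≠ 0)]
    ring
  · have h0 : ((α + 1) * |(0:ℝ)| ^ α) = 0 := by
      simp [Real.zero_rpow hα.ne']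
    rw [h0, hasDerivAt_iff_tendsto_slope]
    have : (slope (fun t : ℝ => t * |t| ^ α) 0) =ᶠ[nhdsWithin 0 {(0:ℝ)}ᶜ] fun t => |t| ^ α := by
      filter_upwards [self_mem_nhdsWithin] with x hx
      have hx' : x ≠ 0 := hx
      simp only [slope, vsub_eq_sub, smul_eq_mul, sub_zero]
      rw [zero_mul, sub_zero, mul_comm x]
      rw [mul_comm, mul_assoc, mul_inv_cancel₀ hx', mul_one]
    rw [tendsto_congr' this]
    have h2 : Tendsto (fun t : ℝ => |t| ^ α) (nhdsWithin 0 {(0:ℝ)}ᶜ) (nhds (|0| ^ α)) :=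
      ((zb_cont_absrpow hα.le).tendsto 0).mono_left nhdsWithin_le_nhds
    simpa [Real.zero_rpow hα.ne'] using h2
  · have h1 : HasDerivAt (fun t : ℝ => t ^ (α + 1)) ((α + 1) * |t| ^ α) t := by
      have h := Real.hasDerivAt_rpow_const (x := t) (p := α + 1) (Or.inl ht.ne')
      have he : (α + 1) * t ^ (α + 1 - 1) = (α + 1) * |t| ^ α := by
        rw [abs_of_pos ht, add_sub_cancel_right]
      rwa [he] at h
    refine h1.congr_of_eventuallyEq ?_
    filter_upwards [eventually_gt_nhds ht] with x hx
    rw [abs_of_pos hx, Real.rpow_add_one hx.ne']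
    ring

private lemma zb_hasDerivAt_g (hα : 0 < α) (y x : ℝ) :
    HasDerivAt (fun x : ℝ => (x - y) * |x - y| ^ α / (α + 1)) (|x - y| ^ α) x := by
  have h := ((zb_hasDerivAt_mul_abs_rpow hα (x - y)).comp x
    ((hasDerivAt_id x).sub_const y)).div_const (α + 1)
  have he : (α + 1) * |x - y| ^ α * 1 / (α + 1) = |x - y| ^ α := by
    field_simp
  rwa [he] at h

private lemma zb_rpow_subadd (hα0 : 0 < α) (hα1 : α ≤ 1) (a b : ℝ) :
    |a - b| ^ α ≤ |a| ^ α + |b| ^ α := by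
  have h1 : |a - b| ^ α ≤ (|a| + |b|) ^ α :=
    Real.rpow_le_rpow (abs_nonneg _) (abs_sub a b) hα0.le
  refine h1.trans ?_
  have h := NNReal.rpow_add_le_add_rpow (‖a‖₊) (‖b‖₊) hα0.le hα1
  have h2 := NNReal.coe_le_coe.mpr h
  push_cast at h2
  simpa [Real.norm_eq_abs] using h2

private lemma zb_rpow_two_mul (hα0 : 0 < α) (u : ℝ) :
    |u| ^ (α + 2) = (u ^ 2) * |u| ^ α := by
  have h2 : (α + 2 : ℝ) = 2 + α := by ring
  rw [h2, Real.rpow_add' (abs_nonneg u) (by positivity)]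
  rw [show ((2:ℝ) = ((2:ℕ):ℝ)) by norm_num, Real.rpow_natCast, sq_abs]

private lemma zb_rpow_doubling (hα0 : 0 < α) (a b : ℝ) :
    |a - b| ^ (α + 1) ≤ 2 ^ α * (|a| ^ (α + 1) + |b| ^ (α + 1)) := by
  have h1 : |a - b| ^ (α + 1) ≤ (|a| + |b|) ^ (α + 1) :=
    Real.rpow_le_rpow (abs_nonneg _) (abs_sub a b) (by linarith)
  refine h1.trans ?_
  have h := NNReal.rpow_add_le_mul_rpow_add_rpow (‖a‖₊) (‖b‖₊) (p := α + 1) (by linarith)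
  have h2 := NNReal.coe_le_coe.mpr h
  push_cast at h2
  simpa [Real.norm_eq_abs, add_sub_cancel_right] using h2

private lemma zb_rpow_succ {p : ℝ} (hp : 0 ≤ p) (u : ℝ) : |u| ^ p * |u| = |u| ^ (p + 1) := by
  have h := Real.rpow_add' (abs_nonneg u) (show p + 1 ≠ 0 by positivity)
  rw [h, Real.rpow_one]

private lemma zb_abs_le {q : ℝ} (hq : 1 ≤ q) (x : ℝ) : |x| ≤ 1 + |x| ^ q := by
  rcases le_total (|x|) 1 with h | h
  · have := Real.rpow_nonneg (abs_nonneg x) q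
    linarith
  · have h2 : |x| ^ (1:ℝ) ≤ |x| ^ q := Real.rpow_le_rpow_of_exponent_le h hq
    rw [Real.rpow_one] at h2
    have := Real.rpow_nonneg (abs_nonneg x) q
    linarith

private lemma zb_bound (hα0 : 0 < α) (x y : ℝ) :
    |x * ((x - y) * |x - y| ^ α / (α + 1))| ≤
      2 ^ α * (|x| ^ (α + 2) * 1) + 2 ^ α * ((1 + |x| ^ (α + 2)) * |y| ^ (α + 1)) := by
  have hα1' : (0:ℝ) < α + 1 := by linarith
  have h1 : |x * ((x - y) * |x - y| ^ α / (α + 1))| = |x| * |x - y| ^ (α + 1) / (α + 1) := by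
    rw [abs_mul, abs_div, abs_mul, abs_of_nonneg (Real.rpow_nonneg (abs_nonneg _) _),
      abs_of_pos hα1', mul_comm (|x - y|) (|x - y| ^ α), zb_rpow_succ hα0.le, mul_div_assoc]
  rw [h1]
  have h2 : |x| * |x - y| ^ (α + 1) / (α + 1) ≤ |x| * |x - y| ^ (α + 1) :=
    div_le_self (by positivity) (by linarith)
  refine h2.trans ?_
  have h3 : |x| * |x - y| ^ (α + 1) ≤ |x| * (2 ^ α * (|x| ^ (α + 1) + |y| ^ (α + 1))) :=
    mul_le_mul_of_nonneg_left (zb_rpow_doubling hα0 x y) (abs_nonneg x)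
  refine h3.trans ?_
  have hxle : |x| ≤ 1 + |x| ^ (α + 2) := zb_abs_le (by linarith) x
  have h4 : |x| * (2 ^ α * (|x| ^ (α + 1) + |y| ^ (α + 1))) =
      2 ^ α * (|x| ^ (α + 1) * |x|) + 2 ^ α * (|x| * |y| ^ (α + 1)) := by ring
  rw [h4, zb_rpow_succ (by positivity : (0:ℝ) ≤ α + 1), show (α + 1 + 1 : ℝ) = α + 2 by ring]
  have h5 : 2 ^ α * (|x| * |y| ^ (α + 1)) ≤ 2 ^ α * ((1 + |x| ^ (α + 2)) * |y| ^ (α + 1)) := by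
    have : |x| * |y| ^ (α + 1) ≤ (1 + |x| ^ (α + 2)) * |y| ^ (α + 1) :=
      mul_le_mul_of_nonneg_right hxle (Real.rpow_nonneg (abs_nonneg _) _)
    exact mul_le_mul_of_nonneg_left this (by positivity)
  have h6 : (0:ℝ) ≤ 2 ^ α * (|x| ^ (α + 2)) := by positivity
  linarith

end ZbHelpers

/-- If `X` and `X*` are independent, `X` centered with variance `σ² > 0` and `X*`
zero-biased for `X`, then for `α ∈ (0,1]`,
`E[|X − X*|^α] = E[|X^s|^{α+2}]/(2(α+1)σ²)`, where `X^s = X − X̃` is the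
symmetrization of `X` (so that `E[|X^s|^{α+2}]` is the double integral of
`|x−y|^{α+2}` against the law of `X` twice). -/
theorem stmt_7 {Ω : Type*} [MeasureSpace Ω] [IsProbabilityMeasure (ℙ : Measure Ω)]
    (X Xstar : Ω → ℝ) (hX : Measurable X) (hXstar : Measurable Xstar)
    (σ2 : ℝ) (hσ2 : 0 < σ2)
    (hmean : (∫ ω, X ω) = 0) (hvar : variance X ℙ = σ2)
    (hindep : IndepFun X Xstar ℙ)
    (hzb : ∀ f : ℝ → ℝ, Differentiable ℝ f →
      Integrable (fun x => x * f x) (Measure.map X ℙ) →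
      Integrable (deriv f) (Measure.map Xstar ℙ) →
      (∫ x, x * f x ∂(Measure.map X ℙ)) = σ2 * ∫ x, deriv f x ∂(Measure.map Xstar ℙ))
    (α : ℝ) (hα : α ∈ Set.Ioc (0:ℝ) 1)
    (hmom : Integrable (fun x => |x| ^ (α + 2)) (Measure.map X ℙ)) :
    (∫ ω, |X ω - Xstar ω| ^ α) =
      (∫ x, ∫ y, |x - y| ^ (α + 2) ∂(Measure.map X ℙ) ∂(Measure.map X ℙ)) /
        (2 * (α + 1) * σ2) := by
  obtain ⟨hα0, hα1⟩ := hα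
  set μ := Measure.map X ℙ with hμdef
  set ν := Measure.map Xstar ℙ with hνdef
  haveI hμP : IsProbabilityMeasure μ := Measure.isProbabilityMeasure_map hX.aemeasurable
  haveI hνP : IsProbabilityMeasure ν := Measure.isProbabilityMeasure_map hXstar.aemeasurable
  have hσ2' : σ2 ≠ 0 := hσ2.ne'
  have hα1' : (0:ℝ) < α + 1 := by linarith
  -- integrability of |x|^p for 0 ≤ p ≤ α+2 under μ
  have hIpow : ∀ p : ℝ, 0 ≤ p → p ≤ α + 2 → Integrable (fun x : ℝ => |x| ^ p) μ := by
    intro p hp0 hp2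
    refine Integrable.mono ((integrable_const (1:ℝ)).add hmom)
      ((zb_cont_absrpow hp0).aestronglyMeasurable) (ae_of_all _ fun x => ?_)
    rw [Real.norm_eq_abs, Real.norm_eq_abs,
      abs_of_nonneg (Real.rpow_nonneg (abs_nonneg x) p)]
    have h2 : (0:ℝ) ≤ |x| ^ (α + 2) := Real.rpow_nonneg (abs_nonneg x) _
    have hle : |x| ^ p ≤ 1 + |x| ^ (α + 2) := by
      rcases le_total (|x|) 1 with h | h
      · have : |x| ^ p ≤ 1 := Real.rpow_le_one (abs_nonneg x) h hp0
        linarith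
      · have : |x| ^ p ≤ |x| ^ (α + 2) := Real.rpow_le_rpow_of_exponent_le h hp2
        linarith
    calc |x| ^ p ≤ 1 + |x| ^ (α + 2) := hle
      _ ≤ |1 + |x| ^ (α + 2)| := le_abs_self _
  -- Step 1: |x|^α integrable under ν
  have hstep1 : Integrable (fun x : ℝ => |x| ^ α) ν := by
    set K := ∫ x, |x| ^ (α + 2) ∂μ with hKdef
    set gm : ℕ → ℝ → ℝ := fun n t => min (|t| ^ α) (n : ℝ) with hgmdef
    have hgmc : ∀ n, Continuous (gm n) := fun n => (zb_cont_absrpow hα0.le).min continuous_const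
    have hgm_nonneg : ∀ n t, 0 ≤ gm n t := fun n t =>
      le_min (Real.rpow_nonneg (abs_nonneg t) _) (Nat.cast_nonneg n)
    set fm : ℕ → ℝ → ℝ := fun n x => ∫ t in (0:ℝ)..x, gm n t with hfmdef
    have hfd : ∀ n x, HasDerivAt (fm n) (gm n x) x := fun n x =>
      intervalIntegral.integral_hasDerivAt_right ((hgmc n).intervalIntegrable _ _)
        ((hgmc n).stronglyMeasurableAtFilter _ _) (hgmc n).continuousAt
    have hfdiff : ∀ n, Differentiable ℝ (fm n) := fun n x => (hfd n x).differentiableAt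
    have hfcont : ∀ n, Continuous (fm n) := fun n => (hfdiff n).continuous
    have hfbound : ∀ n x, |fm n x| ≤ |x| ^ (α + 1) := by
      intro n x
      have hb : ∀ t ∈ Set.uIoc (0:ℝ) x, ‖gm n t‖ ≤ |x| ^ α := by
        intro t ht
        rw [Real.norm_eq_abs, abs_of_nonneg (hgm_nonneg n t)]
        refine (min_le_left _ _).trans (Real.rpow_le_rpow (abs_nonneg t) ?_ hα0.le)
        have h1 : -|x| ≤ t := le_of_lt (lt_of_le_of_lt
          (le_min (neg_nonpos.mpr (abs_nonneg x)) (neg_abs_le x)) ht.1)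
        have h2 : t ≤ |x| := ht.2.trans (max_le (abs_nonneg x) (le_abs_self x))
        exact abs_le.mpr ⟨h1, h2⟩
      have h := intervalIntegral.norm_integral_le_of_norm_le_const hb
      rw [Real.norm_eq_abs, sub_zero] at h
      calc |fm n x| ≤ |x| ^ α * |x| := h
        _ = |x| ^ (α + 1) := zb_rpow_succ hα0.le x
    have hxfm_int : ∀ n, Integrable (fun x => x * fm n x) μ := by
      intro n
      refine Integrable.mono hmom ((continuous_id.mul (hfcont n)).aestronglyMeasurable)
        (ae_of_all _ fun x => ?_)
      rw [Real.norm_eq_abs, Real.norm_eq_abs, abs_mul,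
        abs_of_nonneg (Real.rpow_nonneg (abs_nonneg x) _)]
      calc |x| * |fm n x| ≤ |x| * |x| ^ (α + 1) :=
            mul_le_mul_of_nonneg_left (hfbound n x) (abs_nonneg x)
        _ = |x| ^ (α + 1) * |x| := mul_comm _ _
        _ = |x| ^ (α + 1 + 1) := zb_rpow_succ (by positivity) x
        _ = |x| ^ (α + 2) := by congr 1; ring
    have hgm_int : ∀ n, Integrable (gm n) ν := fun n =>
      Integrable.mono (integrable_const (n : ℝ)) (hgmc n).aestronglyMeasurable
        (ae_of_all _ fun t => by
          rw [Real.norm_eq_abs, abs_of_nonneg (hgm_nonneg n t), Real.norm_eq_abs]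
          exact (min_le_right _ _).trans (le_abs_self _))
    have hderiv_eq : ∀ n, deriv (fm n) = gm n := fun n => funext fun x => (hfd n x).deriv
    have hKnonneg : 0 ≤ K := integral_nonneg fun x => Real.rpow_nonneg (abs_nonneg x) _
    have hbnd : ∀ n, ∫ x, gm n x ∂ν ≤ K / σ2 := by
      intro n
      have h := hzb (fm n) (hfdiff n) (hxfm_int n) (by rw [hderiv_eq n]; exact hgm_int n)
      rw [hderiv_eq n] at h
      have hb : ∫ x, x * fm n x ∂μ ≤ K := by
        refine integral_mono (hxfm_int n) hmom fun x => ?_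
        calc x * fm n x ≤ |x * fm n x| := le_abs_self _
          _ ≤ |x| ^ (α + 2) := by
              rw [abs_mul]
              calc |x| * |fm n x| ≤ |x| * |x| ^ (α + 1) :=
                    mul_le_mul_of_nonneg_left (hfbound n x) (abs_nonneg x)
                _ = |x| ^ (α + 1) * |x| := mul_comm _ _
                _ = |x| ^ (α + 1 + 1) := zb_rpow_succ (by positivity) x
                _ = |x| ^ (α + 2) := by congr 1; ring
      rw [h] at hb
      exact (le_div_iff₀' hσ2).mpr hb
    refine ⟨(zb_cont_absrpow hα0.le).aestronglyMeasurable, ?_⟩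
    rw [hasFiniteIntegral_iff_ofReal (ae_of_all _ fun t => Real.rpow_nonneg (abs_nonneg t) _)]
    have hsup : ∀ t : ℝ, (⨆ n : ℕ, ENNReal.ofReal (gm n t)) = ENNReal.ofReal (|t| ^ α) := by
      intro t
      apply le_antisymm
      · exact iSup_le fun n => ENNReal.ofReal_le_ofReal (min_le_left _ _)
      · refine le_iSup_of_le ⌈|t| ^ α⌉₊ (ENNReal.ofReal_le_ofReal ?_)
        exact le_min le_rfl (Nat.le_ceil _)
    have hmono : Monotone fun (n : ℕ) (t : ℝ) => ENNReal.ofReal (gm n t) := by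
      intro m n hmn t
      exact ENNReal.ofReal_le_ofReal (min_le_min le_rfl (Nat.cast_le.mpr hmn))
    calc ∫⁻ t, ENNReal.ofReal (|t| ^ α) ∂ν
        = ∫⁻ t, ⨆ n : ℕ, ENNReal.ofReal (gm n t) ∂ν := by
          refine lintegral_congr fun t => (hsup t).symm
      _ = ⨆ n : ℕ, ∫⁻ t, ENNReal.ofReal (gm n t) ∂ν :=
          lintegral_iSup (fun n => ((hgmc n).measurable).ennreal_ofReal) hmono
      _ ≤ ENNReal.ofReal (K / σ2) := by
          refine iSup_le fun n => ?_
          rw [← ofReal_integral_eq_lintegral_ofReal (hgm_int n) (ae_of_all _ (hgm_nonneg n))]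
          exact ENNReal.ofReal_le_ofReal (hbnd n)
      _ < ⊤ := ENNReal.ofReal_lt_top
  -- the test functions
  set g : ℝ → ℝ → ℝ := fun y x => (x - y) * |x - y| ^ α / (α + 1) with hgdef
  have hgd : ∀ y x, HasDerivAt (g y) (|x - y| ^ α) x := fun y x => zb_hasDerivAt_g hα0 y x
  have hgderiv : ∀ y, deriv (g y) = fun x => |x - y| ^ α := fun y =>
    funext fun x => (hgd y x).deriv
  have hgdiff : ∀ y, Differentiable ℝ (g y) := fun y x => (hgd y x).differentiableAt
  have hint_nu : ∀ y, Integrable (fun x => |x - y| ^ α) ν := by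
    intro y
    refine Integrable.mono (hstep1.add (integrable_const (|y| ^ α)))
      (((continuous_id.sub continuous_const).abs.rpow_const
        fun _ => Or.inr hα0.le).aestronglyMeasurable) (ae_of_all _ fun x => ?_)
    rw [Real.norm_eq_abs, Real.norm_eq_abs,
      abs_of_nonneg (Real.rpow_nonneg (abs_nonneg _) _)]
    calc |x - y| ^ α ≤ |x| ^ α + |y| ^ α := zb_rpow_subadd hα0 hα1 x y
      _ ≤ |(|x| ^ α + |y| ^ α)| := le_abs_self _
  have hcontg : ∀ y, Continuous fun x : ℝ => x * g y x := by
    intro y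
    exact continuous_id.mul (((continuous_id.sub continuous_const).mul
      ((continuous_id.sub continuous_const).abs.rpow_const fun _ => Or.inr hα0.le)).div_const _)
  have hint_mu : ∀ y, Integrable (fun x => x * g y x) μ := by
    intro y
    refine Integrable.mono
      (((hIpow (α + 2) (by linarith) le_rfl).mul_const 1).const_mul (2 ^ α) |>.add
        ((((integrable_const (1:ℝ)).add (hIpow (α + 2) (by linarith) le_rfl)).mul_const
          (|y| ^ (α + 1))).const_mul (2 ^ α)))
      ((hcontg y).aestronglyMeasurable) (ae_of_all _ fun x => ?_)
    rw [Real.norm_eq_abs, Real.norm_eq_abs]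
    refine (zb_bound hα0 x y).trans (le_abs_self _)
  have hzb_eq : ∀ y, σ2 * ∫ x, |x - y| ^ α ∂ν = ∫ x, x * g y x ∂μ := by
    intro y
    have h := hzb (g y) (hgdiff y) (hint_mu y) (by rw [hgderiv y]; exact hint_nu y)
    rw [hgderiv y] at h
    exact h.symm
  -- Step 4: write LHS as double integral
  have hpair : Measurable fun ω => (X ω, Xstar ω) := hX.prodMk hXstar
  have hmap : Measure.map (fun ω => (X ω, Xstar ω)) ℙ = μ.prod ν :=
    (indepFun_iff_map_prod_eq_prod_map_map hX.aemeasurable hXstar.aemeasurable).mp hindep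
  have hcont2 : Continuous fun p : ℝ × ℝ => |p.1 - p.2| ^ α :=
    ((continuous_fst.sub continuous_snd).abs).rpow_const fun _ => Or.inr hα0.le
  have hprod_int : Integrable (fun p : ℝ × ℝ => |p.1 - p.2| ^ α) (μ.prod ν) := by
    have h1 : Integrable (fun p : ℝ × ℝ => |p.1| ^ α * 1 + 1 * |p.2| ^ α) (μ.prod ν) :=
      ((hIpow α hα0.le (by linarith)).mul_prod (integrable_const 1)).add
        ((integrable_const 1).mul_prod hstep1)
    refine h1.mono hcont2.aestronglyMeasurable (ae_of_all _ fun p => ?_)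
    rw [Real.norm_eq_abs, Real.norm_eq_abs,
      abs_of_nonneg (Real.rpow_nonneg (abs_nonneg _) _), mul_one, one_mul]
    calc |p.1 - p.2| ^ α ≤ |p.1| ^ α + |p.2| ^ α := zb_rpow_subadd hα0 hα1 p.1 p.2
      _ ≤ |(|p.1| ^ α + |p.2| ^ α)| := le_abs_self _
  have hE1 : (∫ ω, |X ω - Xstar ω| ^ α) = ∫ x, ∫ y, |x - y| ^ α ∂ν ∂μ := by
    have h0 : (∫ ω, |X ω - Xstar ω| ^ α) = ∫ p : ℝ × ℝ, |p.1 - p.2| ^ α ∂(μ.prod ν) := by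
      rw [← hmap, integral_map hpair.aemeasurable hcont2.aestronglyMeasurable]
    rw [h0, integral_prod _ hprod_int]
  -- symmetrization function
  set F : ℝ × ℝ → ℝ := fun p => p.1 * g p.2 p.1 with hFdef
  have hFcont : Continuous F := by
    apply continuous_fst.mul
    exact ((continuous_fst.sub continuous_snd).mul
      ((continuous_fst.sub continuous_snd).abs.rpow_const fun _ => Or.inr hα0.le)).div_const _
  have hFint : Integrable F (μ.prod μ) := by
    have h1 : Integrable (fun p : ℝ × ℝ =>
        2 ^ α * (|p.1| ^ (α + 2) * 1) + 2 ^ α * ((1 + |p.1| ^ (α + 2)) * |p.2| ^ (α + 1)))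
        (μ.prod μ) := by
      refine Integrable.add ?_ ?_
      · exact ((hIpow (α + 2) (by linarith) le_rfl).mul_prod (integrable_const 1)).const_mul _
      · exact (((integrable_const (1:ℝ)).add (hIpow (α + 2) (by linarith) le_rfl)).mul_prod
          (hIpow (α + 1) (by linarith) (by linarith))).const_mul _
    refine h1.mono hFcont.aestronglyMeasurable (ae_of_all _ fun p => ?_)
    rw [Real.norm_eq_abs, Real.norm_eq_abs]
    exact (zb_bound hα0 p.1 p.2).trans (le_abs_self _)
  have hswap_int : Integrable (fun p : ℝ × ℝ => F (Prod.swap p)) (μ.prod μ) := by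
    have h2 : Integrable F (Measure.map Prod.swap ((μ : Measure ℝ).prod μ)) := by
      rw [Measure.prod_swap]; exact hFint
    exact (integrable_map_measure hFcont.aestronglyMeasurable
      measurable_swap.aemeasurable).mp h2
  have hswap_eq : ∫ p : ℝ × ℝ, F (Prod.swap p) ∂(μ.prod μ) = ∫ p, F p ∂(μ.prod μ) := by
    rw [← integral_map measurable_swap.aemeasurable hFcont.aestronglyMeasurable,
      Measure.prod_swap]
  have hkey : ∀ p : ℝ × ℝ, F p + F (Prod.swap p) = |p.1 - p.2| ^ (α + 2) / (α + 1) := by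
    intro p
    simp only [hFdef, hgdef, Prod.fst_swap, Prod.snd_swap]
    rw [abs_sub_comm p.2 p.1, zb_rpow_two_mul hα0]
    field_simp
    ring
  have hsum_int : Integrable (fun p : ℝ × ℝ => |p.1 - p.2| ^ (α + 2) / (α + 1)) (μ.prod μ) :=
    (hFint.add hswap_int).congr (ae_of_all _ fun p => hkey p)
  have hDint : Integrable (fun p : ℝ × ℝ => |p.1 - p.2| ^ (α + 2)) (μ.prod μ) := by
    have h := hsum_int.mul_const (α + 1)
    refine h.congr (ae_of_all _ fun p => ?_)
    field_simp
  have h2J : (∫ p, F p ∂(μ.prod μ)) * 2 =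
      (∫ p : ℝ × ℝ, |p.1 - p.2| ^ (α + 2) ∂(μ.prod μ)) / (α + 1) := by
    have hadd := integral_add hFint hswap_int
    have hc : ∫ p : ℝ × ℝ, (F p + F (Prod.swap p)) ∂(μ.prod μ)
        = ∫ p : ℝ × ℝ, |p.1 - p.2| ^ (α + 2) / (α + 1) ∂(μ.prod μ) :=
      integral_congr_ae (ae_of_all _ fun p => hkey p)
    rw [hadd, hswap_eq, integral_div] at hc
    linarith
  -- put everything together
  have hE2 : (∫ ω, |X ω - Xstar ω| ^ α) = σ2⁻¹ * ∫ x, ∫ t, F (t, x) ∂μ ∂μ := by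
    rw [hE1]
    have hin : ∀ x : ℝ, ∫ y, |x - y| ^ α ∂ν = σ2⁻¹ * ∫ t, F (t, x) ∂μ := by
      intro x
      have h1 : ∫ y, |x - y| ^ α ∂ν = ∫ y, |y - x| ^ α ∂ν := by
        refine integral_congr_ae (ae_of_all _ fun y => ?_)
        show |x - y| ^ α = |y - x| ^ α
        rw [abs_sub_comm]
      have h2 : ∫ t, F (t, x) ∂μ = ∫ t, t * g x t ∂μ := rfl
      rw [h1, h2, ← hzb_eq x, ← mul_assoc, inv_mul_cancel₀ hσ2', one_mul]
    simp_rw [hin]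
    rw [integral_const_mul]
  have hJ1 : ∫ p, F p ∂(μ.prod μ) = ∫ t, ∫ x, F (t, x) ∂μ ∂μ := integral_prod _ hFint
  have hJ2 : ∫ x, ∫ t, F (t, x) ∂μ ∂μ = ∫ t, ∫ x, F (t, x) ∂μ ∂μ :=
    integral_integral_swap (f := fun x t => F (t, x)) hswap_int
  have hD : ∫ p : ℝ × ℝ, |p.1 - p.2| ^ (α + 2) ∂(μ.prod μ)
      = ∫ x, ∫ y, |x - y| ^ (α + 2) ∂μ ∂μ := integral_prod _ hDint
  rw [hE2, hJ2, ← hJ1]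
  rw [← hD]
  have hJval : ∫ p, F p ∂(μ.prod μ)
      = (∫ p : ℝ × ℝ, |p.1 - p.2| ^ (α + 2) ∂(μ.prod μ)) / (α + 1) / 2 := by
    linarith
  rw [hJval, inv_mul_eq_div, div_div, div_div]
  congr 1
  ring
end

section
/- Let A ⊂ (−∞,−1] ∪ [1,+∞) be an interval, α ∈ (0,1], p ≥ 0, and 0 ≤ q ≤ p. For a Borel function f on A define ‖f‖_{α,p}^A = sup_{x≠y, x,y∈A} |f(x)−f(y)|/(|x−y|^α(1+|x|^p+|y|^p)). Then ‖f‖_{α,p}^A < ∞ if and only if ‖f(x)/x^{p−q}‖_{α,q}^A < ∞. -/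
/-! Write `a = |x| ≥ b = |y| ≥ 1` and `d = |x - y| ≥ a - b`. Multiplying by `|x| ^ ρ` splits as
`g x a^ρ - g y b^ρ = (g x - g y) a^ρ + g y (a^ρ - b^ρ)`. The weighted Hölder bound with exponent
`t` gives the growth `|g y| ≲ b^(t+α)`, and the mean value theorem gives
`b^α |a^ρ - b^ρ| ≲ d^α max(a^ρ, b^ρ)` (distinguishing `a - b ≤ b` from `a - b ≥ b`); so
multiplication by `|x| ^ ρ` raises the weight exponent from `t` to `t + ρ` whenever
`t, t + ρ ≥ 0`. Apply this with `ρ = ±(p - q)`. As `A` is an interval avoiding `(-1, 1)`,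
`sign x` is constant on `A` and changes the quotient only by a global sign. -/

open Real Set

theorem Set.OrdConnected.subset_Iic_or_subset_Ici {α : Type*} [LinearOrder α] [DenselyOrdered α]
    {A : Set α} (hA : A.OrdConnected) {a b : α} (hab : a < b) (h : A ⊆ Iic a ∪ Ici b) :
    A ⊆ Iic a ∨ A ⊆ Ici b := by
  by_contra! hcon
  obtain ⟨x, hxA, hxa⟩ := not_subset.1 hcon.1
  obtain ⟨y, hyA, hyb⟩ := not_subset.1 hcon.2
  have hbx : b ≤ x := (h hxA).resolve_left hxa
  have hya : y ≤ a := (h hyA).resolve_right hyb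
  obtain ⟨c, hac, hcb⟩ := exists_between hab
  rcases h (hA.out hyA hxA (show c ∈ Icc y x from ⟨by order, by order⟩)) with hc | hc
  · exact absurd (mem_Iic.1 hc) (not_le.2 hac)
  · exact absurd (mem_Ici.1 hc) (not_le.2 hcb)

theorem mul_abs_rpow_sub_rpow_le {a b : ℝ} (hb : 0 < b) (hba : b ≤ a) (ρ : ℝ) :
    b * |a ^ ρ - b ^ ρ| ≤ |ρ| * (a - b) * max (a ^ ρ) (b ^ ρ) := by
  rcases hba.eq_or_lt with rfl | hlt
  · simp
  have hderiv : ∀ x ∈ Icc b a, HasDerivAt (fun x => x ^ ρ) (ρ * x ^ (ρ - 1)) x :=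
    fun x hx => hasDerivAt_rpow_const (Or.inl (hb.trans_le hx.1).ne')
  obtain ⟨ξ, ⟨hbξ, hξa⟩, hslope⟩ := exists_hasDerivAt_eq_slope (fun x => x ^ ρ) _ hlt
    (fun x hx => (hderiv x hx).continuousAt.continuousWithinAt)
    (fun x hx => hderiv x (Ioo_subset_Icc_self hx))
  have hξ : 0 < ξ := hb.trans hbξ
  have hdiff : a ^ ρ - b ^ ρ = ρ * ξ ^ (ρ - 1) * (a - b) := by
    rw [hslope]; field_simp [(sub_pos.2 hlt).ne']
  have hξρ : ξ ^ ρ ≤ max (a ^ ρ) (b ^ ρ) := by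
    rcases le_total 0 ρ with hρ | hρ
    · exact le_max_of_le_left (rpow_le_rpow hξ.le hξa.le hρ)
    · exact le_max_of_le_right (rpow_le_rpow_of_nonpos hb hbξ.le hρ)
  calc b * |a ^ ρ - b ^ ρ| = |ρ| * (a - b) * (b * (ξ ^ ρ / ξ)) := by
        rw [hdiff, abs_mul, abs_mul, abs_of_pos (rpow_pos_of_pos hξ _),
          abs_of_pos (sub_pos.2 hlt), rpow_sub_one hξ.ne']
        ring
    _ ≤ |ρ| * (a - b) * ξ ^ ρ := by
        gcongr
        rw [mul_div_assoc', div_le_iff₀ hξ, mul_comm]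
        gcongr
    _ ≤ |ρ| * (a - b) * max (a ^ ρ) (b ^ ρ) := by gcongr

theorem sub_mul_rpow_le_rpow_mul {a b d α : ℝ} (hb : 0 ≤ b) (hba : b ≤ a) (hab : a - b ≤ b)
    (hd : a - b ≤ d) (hα : 0 ≤ α) (hα1 : α ≤ 1) : (a - b) * b ^ α ≤ d ^ α * b := by
  have hsplit : a - b = (a - b) ^ α * (a - b) ^ (1 - α) := by
    rw [← rpow_add' (sub_nonneg.2 hba) (by norm_num), add_sub_cancel, rpow_one]
  calc (a - b) * b ^ α = (a - b) ^ α * ((a - b) ^ (1 - α) * b ^ α) := by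
        nth_rw 1 [hsplit]; ring
    _ ≤ d ^ α * (b ^ (1 - α) * b ^ α) := by
        have hab0 := sub_nonneg.2 hba
        have hd0 := hab0.trans hd
        gcongr
    _ = d ^ α * b := by rw [← rpow_add' hb (by norm_num), sub_add_cancel, rpow_one]

theorem rpow_mul_abs_rpow_sub_rpow_le {a b d α : ℝ} (hb : 0 < b) (hba : b ≤ a) (hd : a - b ≤ d)
    (hα : 0 ≤ α) (hα1 : α ≤ 1) (ρ : ℝ) :
    b ^ α * |a ^ ρ - b ^ ρ| ≤ max 1 |ρ| * d ^ α * max (a ^ ρ) (b ^ ρ) := by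
  have hd0 : 0 ≤ d := (sub_nonneg.2 hba).trans hd
  rcases le_total (a - b) b with hclose | hfar
  · refine le_of_mul_le_mul_left ?_ hb
    calc b * (b ^ α * |a ^ ρ - b ^ ρ|) = b ^ α * (b * |a ^ ρ - b ^ ρ|) := by ring
      _ ≤ b ^ α * (|ρ| * (a - b) * max (a ^ ρ) (b ^ ρ)) :=
          mul_le_mul_of_nonneg_left (mul_abs_rpow_sub_rpow_le hb hba ρ) (by positivity)
      _ = |ρ| * max (a ^ ρ) (b ^ ρ) * ((a - b) * b ^ α) := by ring
      _ ≤ max 1 |ρ| * max (a ^ ρ) (b ^ ρ) * (d ^ α * b) :=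
          mul_le_mul (by gcongr; exact le_max_right _ _)
            (sub_mul_rpow_le_rpow_mul hb.le hba hclose hd hα hα1)
            (mul_nonneg (sub_nonneg.2 hba) (by positivity)) (by positivity)
      _ = b * (max 1 |ρ| * d ^ α * max (a ^ ρ) (b ^ ρ)) := by ring
  · have hsub : |a ^ ρ - b ^ ρ| ≤ max (a ^ ρ) (b ^ ρ) := by
      have := rpow_nonneg (hb.le.trans hba) ρ
      have := rpow_nonneg hb.le ρ
      rw [abs_sub_le_iff]
      constructor <;> linarith [le_max_left (a ^ ρ) (b ^ ρ), le_max_right (a ^ ρ) (b ^ ρ)]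
    calc b ^ α * |a ^ ρ - b ^ ρ| ≤ d ^ α * max (a ^ ρ) (b ^ ρ) := by
          gcongr; linarith
      _ ≤ max 1 |ρ| * d ^ α * max (a ^ ρ) (b ^ ρ) := by
          rw [mul_assoc]; exact le_mul_of_one_le_left (by positivity) (le_max_left _ _)

theorem rpow_mul_max_rpow_le_rpow_add {a b t ρ : ℝ} (hb : 0 < b) (hba : b ≤ a) (ht : 0 ≤ t)
    (htρ : 0 ≤ t + ρ) : b ^ t * max (a ^ ρ) (b ^ ρ) ≤ a ^ (t + ρ) := by
  have ha : 0 < a := hb.trans_le hba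
  rw [mul_max_of_nonneg _ _ (rpow_nonneg hb.le t), max_le_iff, ← rpow_add hb]
  exact ⟨by rw [rpow_add ha]; gcongr, rpow_le_rpow hb.le hba htρ⟩

/-- The seminorm `‖f‖_{α,s}^A` of the paper is finite. -/
def WeightedHolderOn (A : Set ℝ) (α s : ℝ) (f : ℝ → ℝ) : Prop :=
  ∃ C : ℝ, ∀ x ∈ A, ∀ y ∈ A, x ≠ y → |f x - f y| ≤ C * |x - y| ^ α * (1 + |x| ^ s + |y| ^ s)

namespace WeightedHolderOn

variable {A : Set ℝ} {α s : ℝ} {f g : ℝ → ℝ}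

theorem congr (hf : WeightedHolderOn A α s f) (hfg : EqOn f g A) : WeightedHolderOn A α s g := by
  obtain ⟨C, hC⟩ := hf
  exact ⟨C, fun x hx y hy hxy => by rw [← hfg hx, ← hfg hy]; exact hC x hx y hy hxy⟩

theorem congr_iff (hfg : EqOn f g A) : WeightedHolderOn A α s f ↔ WeightedHolderOn A α s g :=
  ⟨fun hf => hf.congr hfg, fun hg => hg.congr hfg.symm⟩

theorem neg_iff : WeightedHolderOn A α s (fun x => -f x) ↔ WeightedHolderOn A α s f := by
  have habs (x y : ℝ) : |-f x - -f y| = |f x - f y| := by rw [neg_sub_neg, abs_sub_comm]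
  simp only [WeightedHolderOn, habs]

theorem of_abs_le {C : ℝ}
    (h : ∀ x ∈ A, ∀ y ∈ A, x ≠ y → |y| ≤ |x| →
      |f x - f y| ≤ C * |x - y| ^ α * (1 + |x| ^ s + |y| ^ s)) :
    WeightedHolderOn A α s f := by
  refine ⟨C, fun x hx y hy hxy => (le_total |y| |x|).elim (h x hx y hy hxy) fun hxy' => ?_⟩
  rw [abs_sub_comm (f x), abs_sub_comm x, add_right_comm]
  exact h y hy x hx hxy.symm hxy'

theorem exists_nonneg_const (hf : WeightedHolderOn A α s f) (hα : 0 < α) :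
    ∃ C, 0 ≤ C ∧ ∀ x ∈ A, ∀ y ∈ A, |f x - f y| ≤ C * |x - y| ^ α * (1 + |x| ^ s + |y| ^ s) := by
  obtain ⟨C, hC⟩ := hf
  refine ⟨max C 0, le_max_right _ _, fun x hx y hy => ?_⟩
  rcases eq_or_ne x y with rfl | hxy
  · simp [zero_rpow hα.ne']
  calc |f x - f y| ≤ C * |x - y| ^ α * (1 + |x| ^ s + |y| ^ s) := hC x hx y hy hxy
    _ ≤ max C 0 * |x - y| ^ α * (1 + |x| ^ s + |y| ^ s) := by gcongr; exact le_max_left _ _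

theorem exists_abs_le_mul_rpow (hf : WeightedHolderOn A α s f) (hA : ∀ x ∈ A, 1 ≤ |x|)
    (hα : 0 < α) (hs : 0 ≤ s) {x₀ : ℝ} (hx₀ : x₀ ∈ A) :
    ∃ K, 0 ≤ K ∧ ∀ y ∈ A, |f y| ≤ K * |y| ^ (s + α) := by
  obtain ⟨C, hC0, hC⟩ := hf.exists_nonneg_const hα
  refine ⟨|f x₀| + C * (1 + |x₀|) ^ α * (2 + |x₀| ^ s), by positivity, fun y hy => ?_⟩
  have hy1 := hA y hy
  have hys : 1 ≤ |y| ^ s := one_le_rpow hy1 hs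
  have hdist : |y - x₀| ≤ (1 + |x₀|) * |y| := by
    have := abs_sub y x₀
    nlinarith [abs_nonneg x₀]
  have hweight : 1 + |y| ^ s + |x₀| ^ s ≤ (2 + |x₀| ^ s) * |y| ^ s := by
    nlinarith [rpow_nonneg (abs_nonneg x₀) s]
  calc |f y| ≤ |f x₀| + |f y - f x₀| := by
        have := abs_add_le (f x₀) (f y - f x₀); rwa [add_sub_cancel] at this
    _ ≤ |f x₀| * |y| ^ (s + α) + C * ((1 + |x₀|) * |y|) ^ α * ((2 + |x₀| ^ s) * |y| ^ s) := by
        gcongr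
        · exact le_mul_of_one_le_right (abs_nonneg _) (one_le_rpow hy1 (by positivity))
        · exact (hC y hy x₀ hx₀).trans (by gcongr)
    _ = (|f x₀| + C * (1 + |x₀|) ^ α * (2 + |x₀| ^ s)) * |y| ^ (s + α) := by
        rw [mul_rpow (by positivity) (abs_nonneg _), rpow_add (by positivity)]
        ring

theorem mul_rpow_abs {t ρ : ℝ} (hf : WeightedHolderOn A α t g) (hA : ∀ x ∈ A, 1 ≤ |x|)
    (hα : 0 < α) (hα1 : α ≤ 1) (ht : 0 ≤ t) (htρ : 0 ≤ t + ρ) :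
    WeightedHolderOn A α (t + ρ) (fun x => g x * |x| ^ ρ) := by
  rcases A.eq_empty_or_nonempty with rfl | ⟨x₀, hx₀⟩
  · exact ⟨0, by simp⟩
  obtain ⟨C, hC0, hC⟩ := hf.exists_nonneg_const hα
  obtain ⟨K, hK0, hK⟩ := hf.exists_abs_le_mul_rpow hA hα ht hx₀
  refine of_abs_le (C := 3 * C + K * max 1 |ρ|) fun x hx y hy hxy hba => ?_
  set a := |x|
  set b := |y|
  set d := |x - y|
  have hb1 : 1 ≤ b := hA y hy
  have hb : 0 < b := one_pos.trans_le hb1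
  have hd : a - b ≤ d := (le_abs_self _).trans (abs_abs_sub_abs_le_abs_sub x y)
  have hfirst : |g x - g y| * a ^ ρ ≤ 3 * C * d ^ α * a ^ (t + ρ) := by
    have hbt : b ^ t ≤ a ^ t := rpow_le_rpow hb.le hba ht
    have hat : 1 ≤ a ^ t := one_le_rpow (hb1.trans hba) ht
    calc |g x - g y| * a ^ ρ ≤ C * d ^ α * (1 + a ^ t + b ^ t) * a ^ ρ := by
          gcongr; exact hC x hx y hy
      _ ≤ C * d ^ α * (3 * a ^ t) * a ^ ρ := by gcongr; linarith
      _ = 3 * C * d ^ α * a ^ (t + ρ) := by rw [rpow_add (hb.trans_le hba)]; ring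
  have hsecond : |g y| * |a ^ ρ - b ^ ρ| ≤ K * max 1 |ρ| * d ^ α * a ^ (t + ρ) :=
    calc |g y| * |a ^ ρ - b ^ ρ| ≤ K * b ^ (t + α) * |a ^ ρ - b ^ ρ| := by
          gcongr; exact hK y hy
      _ = K * b ^ t * (b ^ α * |a ^ ρ - b ^ ρ|) := by rw [rpow_add hb]; ring
      _ ≤ K * b ^ t * (max 1 |ρ| * d ^ α * max (a ^ ρ) (b ^ ρ)) := by
          have := rpow_mul_abs_rpow_sub_rpow_le hb hba hd hα.le hα1 ρ
          gcongr
      _ = K * max 1 |ρ| * d ^ α * (b ^ t * max (a ^ ρ) (b ^ ρ)) := by ring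
      _ ≤ K * max 1 |ρ| * d ^ α * a ^ (t + ρ) := by
          gcongr; exact rpow_mul_max_rpow_le_rpow_add hb hba ht htρ
  calc |g x * a ^ ρ - g y * b ^ ρ| = |(g x - g y) * a ^ ρ + g y * (a ^ ρ - b ^ ρ)| := by
        congr 1; ring
    _ ≤ |g x - g y| * a ^ ρ + |g y| * |a ^ ρ - b ^ ρ| := (abs_add_le _ _).trans_eq <| by
        rw [abs_mul, abs_mul, abs_of_nonneg (rpow_nonneg (abs_nonneg x) ρ)]
    _ ≤ (3 * C + K * max 1 |ρ|) * d ^ α * a ^ (t + ρ) := by linarith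
    _ ≤ (3 * C + K * max 1 |ρ|) * d ^ α * (1 + a ^ (t + ρ) + b ^ (t + ρ)) := by
        gcongr; linarith [rpow_nonneg hb.le (t + ρ)]

theorem sign_mul_iff (hA : A ⊆ Iio 0 ∨ A ⊆ Ioi 0) :
    WeightedHolderOn A α s (fun x => Real.sign x * f x) ↔ WeightedHolderOn A α s f := by
  rcases hA with hneg | hpos
  · rw [← neg_iff]
    exact congr_iff fun x hx => by simp [sign_of_neg (hneg hx)]
  · exact congr_iff fun x hx => by simp [sign_of_pos (hpos hx)]

end WeightedHolderOn

theorem stmt_14_general (A : Set ℝ) (hA : A.OrdConnected)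
    (hA1 : A ⊆ Set.Iic (-1) ∪ Set.Ici 1)
    (α p q : ℝ) (hα : α ∈ Set.Ioc (0:ℝ) 1) (hq : 0 ≤ q) (hqp : q ≤ p)
    (f : ℝ → ℝ) :
    (∃ C : ℝ, ∀ x ∈ A, ∀ y ∈ A, x ≠ y →
      |f x - f y| ≤ C * |x - y| ^ α * (1 + |x| ^ p + |y| ^ p)) ↔
    (∃ C : ℝ, ∀ x ∈ A, ∀ y ∈ A, x ≠ y →
      |f x / (Real.sign x * |x| ^ (p - q)) - f y / (Real.sign y * |y| ^ (p - q))| ≤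
        C * |x - y| ^ α * (1 + |x| ^ q + |y| ^ q)) := by
  obtain ⟨hα0, hα1⟩ := hα
  have hA1' : ∀ x ∈ A, 1 ≤ |x| := fun x hx =>
    (hA1 hx).elim (fun h => le_abs.2 (Or.inr (by linarith [mem_Iic.1 h])))
      (fun h => le_abs.2 (Or.inl h))
  have hsign : A ⊆ Iio 0 ∨ A ⊆ Ioi 0 :=
    (hA.subset_Iic_or_subset_Ici (by norm_num) hA1).imp
      (fun h => h.trans (Iic_subset_Iio.2 (by norm_num)))
      (fun h => h.trans (Ici_subset_Ioi.2 one_pos))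
  have hquot (x : ℝ) :
      f x / (Real.sign x * |x| ^ (p - q)) = Real.sign x * (f x * |x| ^ (q - p)) := by
    rw [div_eq_mul_inv, mul_inv, inv_sign, ← rpow_neg (abs_nonneg x), neg_sub]
    ring
  change WeightedHolderOn A α p f ↔
    WeightedHolderOn A α q (fun x => f x / (Real.sign x * |x| ^ (p - q)))
  simp only [hquot, WeightedHolderOn.sign_mul_iff hsign]
  refine ⟨fun h => ?_, fun h => ?_⟩
  · simpa only [add_sub_cancel] using
      h.mul_rpow_abs hA1' hα0 hα1 (hq.trans hqp) (by linarith : 0 ≤ p + (q - p))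
  · refine (add_sub_cancel q p ▸ h.mul_rpow_abs hA1' hα0 hα1 hq (by linarith)).congr fun x hx => ?_
    dsimp only
    rw [mul_assoc, ← rpow_add (one_pos.trans_le (hA1' x hx)), sub_add_sub_cancel, sub_self,
      rpow_zero, mul_one]

/-- For an interval `A ⊆ (−∞,−1] ∪ [1,∞)`, `0 ≤ q ≤ p`, the seminorm
`‖f‖_{α,p}^A` is finite iff `‖f(x)/x^{p−q}‖_{α,q}^A` is finite, where `x^{p−q}`
denotes the sign-preserving real power `sign(x)·|x|^{p−q}`. -/
theorem stmt_14 (A : Set ℝ) (hA : A.OrdConnected)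
    (hA1 : A ⊆ Set.Iic (-1) ∪ Set.Ici 1)
    (α p q : ℝ) (hα : α ∈ Set.Ioc (0:ℝ) 1) (hq : 0 ≤ q) (hqp : q ≤ p)
    (f : ℝ → ℝ) (hf : Measurable f) :
    (∃ C : ℝ, ∀ x ∈ A, ∀ y ∈ A, x ≠ y →
      |f x - f y| ≤ C * |x - y| ^ α * (1 + |x| ^ p + |y| ^ p)) ↔
    (∃ C : ℝ, ∀ x ∈ A, ∀ y ∈ A, x ≠ y →
      |f x / (Real.sign x * |x| ^ (p - q)) - f y / (Real.sign y * |y| ^ (p - q))| ≤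
        C * |x - y| ^ α * (1 + |x| ^ q + |y| ^ q)) :=
  stmt_14_general A hA hA1 α p q hα hq hqp f
end

section
/- Let σ > 0 and for a Borel function h with ∫_{|x|≥1}|h(x)P(x)|φ_σ(x)dx < ∞ for every polynomial P (h ∈ E_σ), define f̃_h(x) = (1/(σ²φ_σ(x))) ∫_x^∞ h(t)φ_σ(t)dt for x ≥ 1, and f̃_h(x) = (1/(σ²φ_σ(x))) ∫_{−∞}^x h(t)φ_σ(t)dt for x ≤ −1, where φ_σ is the N(0,σ²) density. Then f̃_h is well defined and f̃_h ∈ E_σ, i.e. ∫_{|x|≥1}|f̃_h(x)P(x)|φ_σ(x)dx < ∞ for every polynomial P. -/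
open MeasureTheory

/-- Density of `N(0,σ²)`. -/
noncomputable def gaussDens (σ x : ℝ) : ℝ :=
  (1 / (σ * Real.sqrt (2 * Real.pi))) * Real.exp (-x ^ 2 / (2 * σ ^ 2))

/-- `h ∈ E_σ`: Borel functions on `ℝ \ (−1,1)` integrable against `P·φ_σ` for
every polynomial `P`. -/
def memEsig (σ : ℝ) (h : ℝ → ℝ) : Prop :=
  Measurable h ∧ ∀ P : Polynomial ℝ,
    IntegrableOn (fun x => |h x * P.eval x| * gaussDens σ x) {x : ℝ | 1 ≤ |x|}

/-- The solution `f̃_h` of the modified Stein equation: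
`f̃_h(x) = (1/(σ²φ_σ(x))) ∫_x^∞ h φ_σ` for `x ≥ 1` and
`f̃_h(x) = (1/(σ²φ_σ(x))) ∫_{−∞}^x h φ_σ` for `x ≤ −1`. -/
noncomputable def tildeF (σ : ℝ) (h : ℝ → ℝ) (x : ℝ) : ℝ :=
  if 0 ≤ x then (1 / (σ ^ 2 * gaussDens σ x)) * ∫ t in Set.Ioi x, h t * gaussDens σ t
  else (1 / (σ ^ 2 * gaussDens σ x)) * ∫ t in Set.Iio x, h t * gaussDens σ t

lemma gaussDens_pos {σ : ℝ} (hσ : 0 < σ) (x : ℝ) : 0 < gaussDens σ x := by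
  have h2 : 0 < Real.sqrt (2 * Real.pi) := Real.sqrt_pos.2 (by positivity)
  unfold gaussDens
  positivity

lemma gaussDens_measurable (σ : ℝ) : Measurable (gaussDens σ) := by
  unfold gaussDens; fun_prop

lemma setE_eq : {x : ℝ | 1 ≤ |x|} = Set.Iic (-1 : ℝ) ∪ Set.Ici (1 : ℝ) := by
  ext x
  simp only [Set.mem_setOf_eq, Set.mem_union, Set.mem_Iic, Set.mem_Ici, le_abs]
  constructor
  · rintro (h | h)
    · right; exact h
    · left; linarith
  · rintro (h | h)
    · right; linarith
    · left; exact h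

lemma setE_meas : MeasurableSet {x : ℝ | 1 ≤ |x|} := by
  rw [setE_eq]; exact measurableSet_Iic.union measurableSet_Ici

/-- Polynomial growth bound. -/
lemma poly_bound (P : Polynomial ℝ) : ∃ A : ℝ, 0 ≤ A ∧
    ∀ x : ℝ, 1 ≤ |x| → |P.eval x| ≤ A * |x| ^ P.natDegree := by
  refine ⟨∑ i ∈ Finset.range (P.natDegree + 1), |P.coeff i|, Finset.sum_nonneg fun _ _ => abs_nonneg _, ?_⟩
  intro x hx
  rw [Polynomial.eval_eq_sum_range, Finset.sum_mul]
  refine (Finset.abs_sum_le_sum_abs _ _).trans (Finset.sum_le_sum ?_)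
  intro i hi
  rw [abs_mul, abs_pow]
  have h1 : |x| ^ i ≤ |x| ^ P.natDegree := by
    apply pow_le_pow_right₀ hx
    rw [Finset.mem_range] at hi
    omega
  have := abs_nonneg (P.coeff i)
  nlinarith [abs_nonneg x, pow_nonneg (abs_nonneg x) i]

lemma integrableOn_abs_mul_pow (σ : ℝ) (h : ℝ → ℝ) (hh : memEsig σ h) (n : ℕ) :
    IntegrableOn (fun t => |h t * t ^ n| * gaussDens σ t) {x : ℝ | 1 ≤ |x|} := by
  have := hh.2 (Polynomial.X ^ n)
  simpa using this

lemma tildeF_measurable (σ : ℝ) (h : ℝ → ℝ) (hm : Measurable h) :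
    Measurable (tildeF σ h) := by
  have hφ := gaussDens_measurable σ
  have hprod : Measurable (fun t : ℝ => h t * gaussDens σ t) := hm.mul hφ
  have h1 : Measurable (fun x : ℝ => ∫ t in Set.Ioi x, h t * gaussDens σ t) := by
    have hsm : StronglyMeasurable (fun p : ℝ × ℝ =>
        if p.1 < p.2 then h p.2 * gaussDens σ p.2 else 0) := by
      refine Measurable.stronglyMeasurable ?_
      exact Measurable.ite (measurableSet_lt measurable_fst measurable_snd)
        (hprod.comp measurable_snd) measurable_const
    have := hsm.integral_prod_right' (ν := volume)
    have heq : (fun x : ℝ => ∫ t in Set.Ioi x, h t * gaussDens σ t)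
        = fun x : ℝ => ∫ t, (if x < t then h t * gaussDens σ t else 0) := by
      ext x
      rw [← integral_indicator measurableSet_Ioi]
      rfl
    rw [heq]
    exact this.measurable
  have h2 : Measurable (fun x : ℝ => ∫ t in Set.Iio x, h t * gaussDens σ t) := by
    have hsm : StronglyMeasurable (fun p : ℝ × ℝ =>
        if p.2 < p.1 then h p.2 * gaussDens σ p.2 else 0) := by
      refine Measurable.stronglyMeasurable ?_
      exact Measurable.ite (measurableSet_lt measurable_snd measurable_fst)
        (hprod.comp measurable_snd) measurable_const
    have := hsm.integral_prod_right' (ν := volume)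
    have heq : (fun x : ℝ => ∫ t in Set.Iio x, h t * gaussDens σ t)
        = fun x : ℝ => ∫ t, (if t < x then h t * gaussDens σ t else 0) := by
      ext x
      rw [← integral_indicator measurableSet_Iio]
      rfl
    rw [heq]
    exact this.measurable
  have hc : Measurable (fun x : ℝ => 1 / (σ ^ 2 * gaussDens σ x)) := by fun_prop
  unfold tildeF
  exact Measurable.ite measurableSet_Ici (hc.mul h1) (hc.mul h2)

/-- If `h ∈ E_σ` then `f̃_h` is well defined (the defining integrals converge)
and `f̃_h ∈ E_σ`. -/
theorem stmt_16 (σ : ℝ) (hσ : 0 < σ) (h : ℝ → ℝ) (hh : memEsig σ h) :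
    (∀ x : ℝ, 1 ≤ x → IntegrableOn (fun t => h t * gaussDens σ t) (Set.Ioi x)) ∧
    (∀ x : ℝ, x ≤ -1 → IntegrableOn (fun t => h t * gaussDens σ t) (Set.Iio x)) ∧
    memEsig σ (tildeF σ h) := by
  obtain ⟨hm, hint⟩ := hh
  have hφpos : ∀ x, 0 < gaussDens σ x := gaussDens_pos hσ
  have hφm := gaussDens_measurable σ
  have habs : IntegrableOn (fun t => |h t| * gaussDens σ t) {x : ℝ | 1 ≤ |x|} := by
    simpa using hint 1
  have part1 : ∀ x : ℝ, 1 ≤ x → IntegrableOn (fun t => h t * gaussDens σ t) (Set.Ioi x) := by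
    intro x hx
    have hsub : Set.Ioi x ⊆ {t : ℝ | 1 ≤ |t|} := by
      intro t ht
      have : x < t := ht
      simp only [Set.mem_setOf_eq, le_abs]
      left; linarith
    refine Integrable.mono' (habs.mono_set hsub) ?_ ?_
    · exact ((hm.mul hφm).aestronglyMeasurable).restrict
    · filter_upwards with t
      rw [Real.norm_eq_abs, abs_mul, abs_of_pos (hφpos t)]
  have part2 : ∀ x : ℝ, x ≤ -1 → IntegrableOn (fun t => h t * gaussDens σ t) (Set.Iio x) := by
    intro x hx
    have hsub : Set.Iio x ⊆ {t : ℝ | 1 ≤ |t|} := by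
      intro t ht
      have : t < x := ht
      simp only [Set.mem_setOf_eq, le_abs]
      right; linarith
    refine Integrable.mono' (habs.mono_set hsub) ?_ ?_
    · exact ((hm.mul hφm).aestronglyMeasurable).restrict
    · filter_upwards with t
      rw [Real.norm_eq_abs, abs_mul, abs_of_pos (hφpos t)]
  -- integrability of the dominating functions
  have hdom : ∀ B : ℝ, IntegrableOn (fun x : ℝ => B / x ^ 2) (Set.Ici (1:ℝ)) := by
    intro B
    have h1 : IntegrableOn (fun x : ℝ => x ^ (-2 : ℝ)) (Set.Ioi (1:ℝ)) :=
      integrableOn_Ioi_rpow_of_lt (by norm_num) one_pos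
    rw [integrableOn_Ici_iff_integrableOn_Ioi]
    refine IntegrableOn.congr_fun (Integrable.const_mul h1 B) ?_ measurableSet_Ioi
    intro x hx
    have hx0 : (0:ℝ) < x := lt_trans one_pos hx
    show B * x ^ (-2:ℝ) = B / x ^ 2
    rw [show (-2:ℝ) = -((2:ℕ):ℝ) by norm_num, Real.rpow_neg hx0.le, Real.rpow_natCast,
      div_eq_mul_inv]
  have hdom' : ∀ B : ℝ, IntegrableOn (fun x : ℝ => B / x ^ 2) (Set.Iic (-1:ℝ)) := by
    intro B
    have h2 := (MeasurePreserving.integrableOn_comp_preimage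
      (Measure.measurePreserving_neg (volume : Measure ℝ))
      (Homeomorph.neg ℝ).measurableEmbedding).2 (hdom B)
    have hpre : (Neg.neg : ℝ → ℝ) ⁻¹' (Set.Ici (1:ℝ)) = Set.Iic (-1) := by
      ext x; simp [le_neg]
    rw [hpre] at h2
    refine h2.congr_fun ?_ measurableSet_Iic
    intro x _
    simp [Function.comp, neg_sq]
  refine ⟨part1, part2, tildeF_measurable σ h hm, ?_⟩
  intro P
  obtain ⟨A, hA0, hA⟩ := poly_bound P
  set d := P.natDegree with hd
  set n := d + 2 with hn
  have hCint := integrableOn_abs_mul_pow σ h ⟨hm, hint⟩ n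
  set C := ∫ t in {x : ℝ | 1 ≤ |x|}, |h t * t ^ n| * gaussDens σ t with hC
  have hC0 : 0 ≤ C := setIntegral_nonneg setE_meas
    (fun t _ => mul_nonneg (abs_nonneg _) (hφpos t).le)
  have keyR : ∀ x : ℝ, 1 ≤ x → ‖∫ t in Set.Ioi x, h t * gaussDens σ t‖ ≤ C / |x| ^ n := by
    intro x hx
    have hx0 : (0:ℝ) < x := lt_of_lt_of_le one_pos hx
    have hsub : Set.Ioi x ⊆ {t : ℝ | 1 ≤ |t|} := by
      intro t ht
      have : x < t := ht
      simp only [Set.mem_setOf_eq, le_abs]; left; linarith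
    have hxabs : |x| = x := abs_of_pos hx0
    calc ‖∫ t in Set.Ioi x, h t * gaussDens σ t‖
        ≤ ∫ t in Set.Ioi x, ‖h t * gaussDens σ t‖ := norm_integral_le_integral_norm _
      _ ≤ ∫ t in Set.Ioi x, (|h t * t ^ n| * gaussDens σ t) / |x| ^ n := by
          refine setIntegral_mono_on (part1 x hx).norm
            (((hCint.mono_set hsub)).div_const _) measurableSet_Ioi ?_
          intro t ht
          have htx : x < t := ht
          have ht0 : (0:ℝ) < t := lt_trans hx0 htx
          have h1 : |x| ^ n ≤ |t| ^ n := by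
            apply pow_le_pow_left₀ (abs_nonneg x)
            rw [hxabs, abs_of_pos ht0]; exact htx.le
          rw [Real.norm_eq_abs, abs_mul, abs_of_pos (hφpos t), abs_mul, abs_pow]
          rw [le_div_iff₀ (by positivity)]
          have hφt := (hφpos t).le
          have hh0 := abs_nonneg (h t)
          nlinarith [mul_nonneg hh0 hφt, pow_nonneg (abs_nonneg x) n]
      _ = (∫ t in Set.Ioi x, |h t * t ^ n| * gaussDens σ t) / |x| ^ n := by
          rw [integral_div]
      _ ≤ C / |x| ^ n := by
          gcongr
          exact setIntegral_mono_set hCint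
            (ae_of_all _ fun t => mul_nonneg (abs_nonneg _) (hφpos t).le)
            (HasSubset.Subset.eventuallyLE hsub)
  have keyL : ∀ x : ℝ, x ≤ -1 → ‖∫ t in Set.Iio x, h t * gaussDens σ t‖ ≤ C / |x| ^ n := by
    intro x hx
    have hx0 : x < 0 := lt_of_le_of_lt hx (by norm_num)
    have hxa : (0:ℝ) < |x| := abs_pos.2 hx0.ne
    have hsub : Set.Iio x ⊆ {t : ℝ | 1 ≤ |t|} := by
      intro t ht
      have : t < x := ht
      simp only [Set.mem_setOf_eq, le_abs]; right; linarith
    calc ‖∫ t in Set.Iio x, h t * gaussDens σ t‖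
        ≤ ∫ t in Set.Iio x, ‖h t * gaussDens σ t‖ := norm_integral_le_integral_norm _
      _ ≤ ∫ t in Set.Iio x, (|h t * t ^ n| * gaussDens σ t) / |x| ^ n := by
          refine setIntegral_mono_on (part2 x hx).norm
            (((hCint.mono_set hsub)).div_const _) measurableSet_Iio ?_
          intro t ht
          have htx : t < x := ht
          have h1 : |x| ^ n ≤ |t| ^ n := by
            apply pow_le_pow_left₀ (abs_nonneg x)
            rw [abs_of_neg hx0, abs_of_neg (lt_trans htx hx0)]; linarith
          rw [Real.norm_eq_abs, abs_mul, abs_of_pos (hφpos t), abs_mul, abs_pow]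
          rw [le_div_iff₀ (pow_pos hxa n)]
          have hφt := (hφpos t).le
          have hh0 := abs_nonneg (h t)
          nlinarith [mul_nonneg hh0 hφt]
      _ = (∫ t in Set.Iio x, |h t * t ^ n| * gaussDens σ t) / |x| ^ n := by
          rw [integral_div]
      _ ≤ C / |x| ^ n := by
          gcongr
          exact setIntegral_mono_set hCint
            (ae_of_all _ fun t => mul_nonneg (abs_nonneg _) (hφpos t).le)
            (HasSubset.Subset.eventuallyLE hsub)
  set B := A * C / σ ^ 2 with hB
  have hmeasI : Measurable fun x => |tildeF σ h x * Polynomial.eval x P| * gaussDens σ x :=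
    (((tildeF_measurable σ h hm).mul ((P.continuous_aeval).measurable)).abs).mul hφm
  have key : ∀ x : ℝ, 1 ≤ |x| →
      |tildeF σ h x * Polynomial.eval x P| * gaussDens σ x ≤ B / x ^ 2 := by
    intro x hx
    have hxne : x ≠ 0 := by
      intro h0; rw [h0] at hx; norm_num at hx
    have hxa : (0:ℝ) < |x| := abs_pos.2 hxne
    set I := if (0:ℝ) ≤ x then (∫ t in Set.Ioi x, h t * gaussDens σ t)
      else (∫ t in Set.Iio x, h t * gaussDens σ t) with hI
    have htf : tildeF σ h x = (1 / (σ ^ 2 * gaussDens σ x)) * I := by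
      rw [hI]; unfold tildeF; split_ifs <;> rfl
    have hIb : ‖I‖ ≤ C / |x| ^ n := by
      rw [hI]
      by_cases h0 : (0:ℝ) ≤ x
      · rw [if_pos h0]
        exact keyR x (by rw [abs_of_nonneg h0] at hx; exact hx)
      · rw [if_neg h0]
        push_neg at h0
        exact keyL x (by rw [abs_of_neg h0] at hx; linarith)
    have hcpos : (0:ℝ) < 1 / (σ ^ 2 * gaussDens σ x) := by
      have := hφpos x; positivity
    have hval : |tildeF σ h x * Polynomial.eval x P| * gaussDens σ x
        = |I| * |Polynomial.eval x P| / σ ^ 2 := by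
      rw [htf, abs_mul, abs_mul, abs_of_pos hcpos]
      have hφx := (hφpos x).ne'
      field_simp
    rw [hval]
    have h1 : |I| * |Polynomial.eval x P| ≤ (C / |x| ^ n) * (A * |x| ^ d) := by
      refine mul_le_mul ?_ (hA x hx) (abs_nonneg _) (by positivity)
      rw [← Real.norm_eq_abs]; exact hIb
    have h2 : (C / |x| ^ n) * (A * |x| ^ d) = A * C / |x| ^ 2 := by
      rw [hn, pow_add]
      field_simp
    have h3 : A * C / |x| ^ 2 = A * C / x ^ 2 := by rw [sq_abs]
    calc |I| * |Polynomial.eval x P| / σ ^ 2 ≤ (A * C / x ^ 2) / σ ^ 2 :=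
          (div_le_div_iff_of_pos_right (pow_pos hσ 2)).2 (h1.trans (le_of_eq (h2.trans h3)))
      _ = B / x ^ 2 := by rw [hB]; ring
  rw [setE_eq]
  refine IntegrableOn.union ?_ ?_
  · refine Integrable.mono' (hdom' B) (hmeasI.aestronglyMeasurable.restrict) ?_
    rw [ae_restrict_iff' measurableSet_Iic]
    filter_upwards with x hx
    simp only [Set.mem_Iic] at hx
    rw [Real.norm_eq_abs, abs_of_nonneg (mul_nonneg (abs_nonneg _) (hφpos x).le)]
    exact key x (le_abs.2 (Or.inr (by linarith)))
  · refine Integrable.mono' (hdom B) (hmeasI.aestronglyMeasurable.restrict) ?_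
    rw [ae_restrict_iff' measurableSet_Ici]
    filter_upwards with x hx
    simp only [Set.mem_Ici] at hx
    rw [Real.norm_eq_abs, abs_of_nonneg (mul_nonneg (abs_nonneg _) (hφpos x).le)]
    exact key x (le_abs.2 (Or.inl hx))
end

section
/- With the modified Stein solution f̃_h as above, if h is differentiable on ℝ \ (−1,1) with h and h' in E_σ, and Λ(h)(x) := (h(x)/x)', then f̃_h'(x) = x · f̃_{Λ(h)}(x) for all |x| ≥ 1. -/
/-!
Differentiating the tail integral `∫_x^∞ h φ_σ` and using `φ_σ' = -(t/σ²) φ_σ` shows that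
`f̃_h` solves `σ² f̃_h' = x f̃_h - h` for `x ≥ 1`. On the other side, integrating `(h/t)' φ_σ` by
parts over the same tail gives `∫_x^∞ Λ(h) φ_σ = -(h(x)/x) φ_σ(x) + σ⁻² ∫_x^∞ h φ_σ`; the boundary
term at infinity vanishes because `(h/t) φ_σ` and its derivative are both integrable, which is
what `h, h' ∈ E_σ` provides. Multiplying by `x / (σ² φ_σ(x))` yields `(x f̃_h - h) / σ²` again.
For `x ≤ -1`, `tildeF` integrates over the left tail without a minus sign, so both sides become
`(x f̃_h + h) / σ²`.
-/

open MeasureTheory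

open Set Filter Topology

section HalfLineIntegral

variable {E : Type*} [NormedAddCommGroup E] [NormedSpace ℝ E] [CompleteSpace E]
  {f : ℝ → E} {x : ℝ}

theorem hasDerivAt_integral_Ioi (hf : IntegrableOn f (Ioi x))
    (hfm : StronglyMeasurableAtFilter f (𝓝 x)) (hc : ContinuousAt f x) :
    HasDerivAt (fun y => ∫ t in Ioi y, f t) (-f x) x := by
  obtain ⟨s, hs, hfs⟩ := hc.integrableAtFilter hfm (volume.finiteAt_nhds x)
  obtain ⟨l, u, ⟨hlx, hxu⟩, hlu⟩ := mem_nhds_iff_exists_Ioo_subset.1 hs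
  have hfl : IntegrableOn f (Ioi l) :=
    ((hfs.mono_set hlu).union hf).mono_set fun t (ht : l < t) => by
      rcases le_or_gt t x with htx | htx
      exacts [Or.inl ⟨ht, htx.trans_lt hxu⟩, Or.inr htx]
  have hFTC : HasDerivAt (fun y => ∫ t in l..y, f t) (f x) x :=
    intervalIntegral.integral_hasDerivAt_right
      ((intervalIntegrable_iff_integrableOn_Ioc_of_le hlx.le).2
        (hfl.mono_set Ioc_subset_Ioi_self)) hfm hc
  refine (hFTC.const_sub (∫ t in Ioi l, f t)).congr_of_eventuallyEq ?_
  filter_upwards [Ioi_mem_nhds hlx] with y hy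
  rw [← intervalIntegral.integral_Ioi_sub_Ioi hfl hy.le, sub_sub_cancel]

theorem hasDerivAt_integral_Iio (hf : IntegrableOn f (Iio x))
    (hfm : StronglyMeasurableAtFilter f (𝓝 x)) (hc : ContinuousAt f x) :
    HasDerivAt (fun y => ∫ t in Iio y, f t) (f x) x := by
  obtain ⟨s, hs, hfs⟩ := hc.integrableAtFilter hfm (volume.finiteAt_nhds x)
  obtain ⟨l, u, ⟨hlx, hxu⟩, hlu⟩ := mem_nhds_iff_exists_Ioo_subset.1 hs
  have hfu : IntegrableOn f (Iio u) :=
    (hf.union (hfs.mono_set hlu)).mono_set fun t (ht : t < u) => by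
      rcases lt_or_ge t x with htx | htx
      exacts [Or.inl htx, Or.inr ⟨hlx.trans_le htx, ht⟩]
  have hFTC : HasDerivAt (fun y => ∫ t in y..u, f t) (-f x) x :=
    intervalIntegral.integral_hasDerivAt_left
      ((intervalIntegrable_iff_integrableOn_Ioo_of_le hxu.le).2
        (hfu.mono_set Ioo_subset_Iio_self)) hfm hc
  refine ((hFTC.const_sub (∫ t in Iio u, f t)).congr_of_eventuallyEq ?_).congr_deriv
    (neg_neg _)
  filter_upwards [Iio_mem_nhds hxu] with y hy
  rw [← intervalIntegral.integral_Iio_sub_Iio' hfu (hfu.mono_set (Iio_subset_Iio hy.le)),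
    sub_sub_cancel]

end HalfLineIntegral

theorem Ici_subset_one_le_abs {x : ℝ} (hx : 1 ≤ x) : Ici x ⊆ {t : ℝ | 1 ≤ |t|} :=
  fun t ht => hx.trans (ht.out.trans (le_abs_self t))

theorem Iic_subset_one_le_abs {x : ℝ} (hx : x ≤ -1) : Iic x ⊆ {t : ℝ | 1 ≤ |t|} :=
  fun t (ht : t ≤ x) => show 1 ≤ |t| by linarith [neg_le_abs t]

theorem ne_zero_of_one_le_abs {t : ℝ} (ht : 1 ≤ |t|) : t ≠ 0 :=
  abs_pos.1 (one_pos.trans_le ht)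

theorem measurableSet_one_le_abs : MeasurableSet {t : ℝ | 1 ≤ |t|} :=
  measurableSet_le measurable_const continuous_abs.measurable

theorem MeasureTheory.IntegrableOn.div_pow_of_one_le_abs {f : ℝ → ℝ}
    (hf : IntegrableOn f {t : ℝ | 1 ≤ |t|}) (n : ℕ) :
    IntegrableOn (fun t => f t / t ^ n) {t : ℝ | 1 ≤ |t|} :=
  Integrable.mono hf
    (hf.aemeasurable.div (measurable_id.pow_const n).aemeasurable).aestronglyMeasurable <|
    ae_restrict_of_forall_mem measurableSet_one_le_abs fun t (ht : 1 ≤ |t|) => by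
      rw [norm_div, norm_pow, Real.norm_eq_abs t]
      exact div_le_self (norm_nonneg _) (one_le_pow₀ ht)

section Gaussian

variable {σ : ℝ}

theorem gaussDens_ne_zero (hσ : σ ≠ 0) (x : ℝ) : gaussDens σ x ≠ 0 := by
  unfold gaussDens
  have := Real.sqrt_pos.2 Real.two_pi_pos
  positivity

theorem continuous_gaussDens (σ : ℝ) : Continuous (gaussDens σ) := by
  unfold gaussDens; fun_prop

theorem hasDerivAt_gaussDens (x : ℝ) :
    HasDerivAt (gaussDens σ) (-x / σ ^ 2 * gaussDens σ x) x := by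
  have hexp : HasDerivAt (fun y : ℝ => -y ^ 2 / (2 * σ ^ 2)) (-x / σ ^ 2) x := by
    refine (((hasDerivAt_pow 2 x).neg).div_const (2 * σ ^ 2)).congr_deriv ?_
    push_cast
    rw [pow_one, ← mul_neg, mul_div_mul_left _ _ (two_ne_zero' ℝ)]
  refine (hexp.exp.const_mul _).congr_deriv ?_
  unfold gaussDens
  ring

theorem HasDerivAt.one_div_sq_gaussDens_mul (hσ : σ ≠ 0) {I : ℝ → ℝ} {I' x : ℝ}
    (hI : HasDerivAt I I' x) :
    HasDerivAt (fun y => 1 / (σ ^ 2 * gaussDens σ y) * I y)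
      ((x * (1 / (σ ^ 2 * gaussDens σ x) * I x) + I' / gaussDens σ x) / σ ^ 2) x := by
  have hφ := gaussDens_ne_zero hσ x
  refine ((hasDerivAt_const x 1).div ((hasDerivAt_gaussDens x).const_mul (σ ^ 2))
    (by positivity) |>.mul hI).congr_deriv ?_
  simp only [Pi.div_apply]
  field_simp
  ring

theorem integrableOn_mul_gaussDens_of_memEsig {h : ℝ → ℝ} (hh : memEsig σ h) :
    IntegrableOn (fun t => h t * gaussDens σ t) {t : ℝ | 1 ≤ |t|} :=
  Integrable.mono (hh.2 1) (hh.1.mul (continuous_gaussDens σ).measurable).aestronglyMeasurable <|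
    Eventually.of_forall fun t => by simp

end Gaussian

section SteinSolution

variable {σ : ℝ} {h : ℝ → ℝ} {x : ℝ}

theorem hasDerivAt_tildeF_of_pos (hσ : σ ≠ 0) (hx : 0 < x) (hm : Measurable h)
    (hc : ContinuousAt h x) (hint : IntegrableOn (fun t => h t * gaussDens σ t) (Ioi x)) :
    HasDerivAt (tildeF σ h) ((x * tildeF σ h x - h x) / σ ^ 2) x := by
  have hI := hasDerivAt_integral_Ioi hint
    (hm.mul (continuous_gaussDens σ).measurable).aestronglyMeasurable.stronglyMeasurableAtFilter
    (hc.mul (continuous_gaussDens σ).continuousAt)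
  refine ((hI.one_div_sq_gaussDens_mul hσ).congr_of_eventuallyEq ?_).congr_deriv ?_
  · filter_upwards [Ioi_mem_nhds hx] with y hy
    rw [tildeF, if_pos hy.le]
  · have := gaussDens_ne_zero hσ x
    rw [tildeF, if_pos hx.le]
    field_simp
    ring

theorem hasDerivAt_tildeF_of_neg (hσ : σ ≠ 0) (hx : x < 0) (hm : Measurable h)
    (hc : ContinuousAt h x) (hint : IntegrableOn (fun t => h t * gaussDens σ t) (Iio x)) :
    HasDerivAt (tildeF σ h) ((x * tildeF σ h x + h x) / σ ^ 2) x := by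
  have hI := hasDerivAt_integral_Iio hint
    (hm.mul (continuous_gaussDens σ).measurable).aestronglyMeasurable.stronglyMeasurableAtFilter
    (hc.mul (continuous_gaussDens σ).continuousAt)
  refine ((hI.one_div_sq_gaussDens_mul hσ).congr_of_eventuallyEq ?_).congr_deriv ?_
  · filter_upwards [Iio_mem_nhds hx] with y hy
    rw [tildeF, if_neg hy.not_ge]
  · have := gaussDens_ne_zero hσ x
    rw [tildeF, if_neg hx.not_ge]
    field_simp

end SteinSolution

section GaussianIntegrationByParts

variable {σ : ℝ} {u u' : ℝ → ℝ} {x : ℝ}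

theorem integral_Ioi_deriv_mul_gaussDens (hu : ∀ t ∈ Ici x, HasDerivAt u (u' t) t)
    (hu' : IntegrableOn (fun t => u' t * gaussDens σ t) (Ioi x))
    (huφ : IntegrableOn (fun t => u t * gaussDens σ t) (Ioi x))
    (htuφ : IntegrableOn (fun t => t * u t * gaussDens σ t) (Ioi x)) :
    ∫ t in Ioi x, u' t * gaussDens σ t =
      -(u x * gaussDens σ x) + (∫ t in Ioi x, t * u t * gaussDens σ t) / σ ^ 2 := by
  have hderiv : ∀ t ∈ Ici x, HasDerivAt (fun y => u y * gaussDens σ y)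
      (u' t * gaussDens σ t - t * u t * gaussDens σ t / σ ^ 2) t := fun t ht =>
    ((hu t ht).mul (hasDerivAt_gaussDens t)).congr_deriv (by ring)
  have hint := hu'.sub (htuφ.div_const (σ ^ 2))
  have hlim := tendsto_zero_of_hasDerivAt_of_integrableOn_Ioi
    (fun t ht => hderiv t (mem_Ici_of_Ioi ht)) hint huφ
  have hFTC := integral_Ioi_of_hasDerivAt_of_tendsto' hderiv hint hlim
  rw [integral_sub hu' (htuφ.div_const _), integral_div] at hFTC
  linarith

theorem integral_Iic_deriv_mul_gaussDens (hu : ∀ t ∈ Iic x, HasDerivAt u (u' t) t)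
    (hu' : IntegrableOn (fun t => u' t * gaussDens σ t) (Iic x))
    (huφ : IntegrableOn (fun t => u t * gaussDens σ t) (Iic x))
    (htuφ : IntegrableOn (fun t => t * u t * gaussDens σ t) (Iic x)) :
    ∫ t in Iic x, u' t * gaussDens σ t =
      u x * gaussDens σ x + (∫ t in Iic x, t * u t * gaussDens σ t) / σ ^ 2 := by
  have hderiv : ∀ t ∈ Iic x, HasDerivAt (fun y => u y * gaussDens σ y)
      (u' t * gaussDens σ t - t * u t * gaussDens σ t / σ ^ 2) t := fun t ht =>
    ((hu t ht).mul (hasDerivAt_gaussDens t)).congr_deriv (by ring)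
  have hint := hu'.sub (htuφ.div_const (σ ^ 2))
  have hlim := tendsto_zero_of_hasDerivAt_of_integrableOn_Iic hderiv hint huφ
  have hFTC := integral_Iic_of_hasDerivAt_of_tendsto' hderiv hint hlim
  rw [integral_sub hu' (htuφ.div_const _), integral_div] at hFTC
  linarith

end GaussianIntegrationByParts

section DivId

variable {σ : ℝ} {h : ℝ → ℝ}

theorem hasDerivAt_div_id {t : ℝ} (hd : DifferentiableAt ℝ h t) (ht : t ≠ 0) :
    HasDerivAt (fun y => h y / y) (deriv h t / t - h t / t ^ 2) t :=
  (hd.hasDerivAt.div (hasDerivAt_id t) ht).congr_deriv (by rw [id, mul_one]; field_simp)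

theorem integrableOn_deriv_div_id_mul_gaussDens
    (hdiff : ∀ x : ℝ, 1 ≤ |x| → DifferentiableAt ℝ h x) (hh : memEsig σ h)
    (hh' : memEsig σ (deriv h)) :
    IntegrableOn (fun t => deriv (fun y => h y / y) t * gaussDens σ t) {t : ℝ | 1 ≤ |t|} := by
  have hh'φ := (integrableOn_mul_gaussDens_of_memEsig hh').div_pow_of_one_le_abs 1
  have hhφ := (integrableOn_mul_gaussDens_of_memEsig hh).div_pow_of_one_le_abs 2
  refine (hh'φ.sub hhφ).congr_fun (fun t (ht : 1 ≤ |t|) => ?_) measurableSet_one_le_abs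
  rw [Pi.sub_apply, (hasDerivAt_div_id (hdiff t ht) (ne_zero_of_one_le_abs ht)).deriv]
  ring

theorem integrableOn_div_id_mul_gaussDens (hh : memEsig σ h) :
    IntegrableOn (fun t => h t / t * gaussDens σ t) {t : ℝ | 1 ≤ |t|} :=
  ((integrableOn_mul_gaussDens_of_memEsig hh).div_pow_of_one_le_abs 1).congr_fun
    (fun t _ => by ring) measurableSet_one_le_abs

end DivId

section LambdaSolution

variable {σ : ℝ} {h : ℝ → ℝ} {x : ℝ}

theorem mul_tildeF_deriv_div_id_of_one_le (hσ : σ ≠ 0)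
    (hdiff : ∀ x : ℝ, 1 ≤ |x| → DifferentiableAt ℝ h x) (hh : memEsig σ h)
    (hh' : memEsig σ (deriv h)) (hx : 1 ≤ x) :
    x * tildeF σ (deriv fun y => h y / y) x = (x * tildeF σ h x - h x) / σ ^ 2 := by
  have hS := Ici_subset_one_le_abs hx
  have hS' := Ioi_subset_Ici_self.trans hS
  have hcancel : EqOn (fun t => t * (h t / t) * gaussDens σ t)
      (fun t => h t * gaussDens σ t) (Ioi x) := fun t ht => by
    field_simp [ne_zero_of_one_le_abs (hS' ht)]
  have hIBP := integral_Ioi_deriv_mul_gaussDens (σ := σ) (u := fun y => h y / y)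
    (fun t ht => (hasDerivAt_div_id (hdiff t (hS ht))
      (ne_zero_of_one_le_abs (hS ht))).differentiableAt.hasDerivAt)
    ((integrableOn_deriv_div_id_mul_gaussDens hdiff hh hh').mono_set hS')
    ((integrableOn_div_id_mul_gaussDens hh).mono_set hS')
    (((integrableOn_mul_gaussDens_of_memEsig hh).mono_set hS').congr_fun hcancel.symm
      measurableSet_Ioi)
  have := gaussDens_ne_zero hσ x
  rw [tildeF, tildeF, if_pos (by linarith), if_pos (by linarith), hIBP,
    setIntegral_congr_fun measurableSet_Ioi hcancel]
  field_simp
  ring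

theorem mul_tildeF_deriv_div_id_of_le_neg_one (hσ : σ ≠ 0)
    (hdiff : ∀ x : ℝ, 1 ≤ |x| → DifferentiableAt ℝ h x) (hh : memEsig σ h)
    (hh' : memEsig σ (deriv h)) (hx : x ≤ -1) :
    x * tildeF σ (deriv fun y => h y / y) x = (x * tildeF σ h x + h x) / σ ^ 2 := by
  have hS := Iic_subset_one_le_abs hx
  have hcancel : EqOn (fun t => t * (h t / t) * gaussDens σ t)
      (fun t => h t * gaussDens σ t) (Iic x) := fun t ht => by
    field_simp [ne_zero_of_one_le_abs (hS ht)]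
  have hIBP := integral_Iic_deriv_mul_gaussDens (σ := σ) (u := fun y => h y / y)
    (fun t ht => (hasDerivAt_div_id (hdiff t (hS ht))
      (ne_zero_of_one_le_abs (hS ht))).differentiableAt.hasDerivAt)
    ((integrableOn_deriv_div_id_mul_gaussDens hdiff hh hh').mono_set hS)
    ((integrableOn_div_id_mul_gaussDens hh).mono_set hS)
    (((integrableOn_mul_gaussDens_of_memEsig hh).mono_set hS).congr_fun hcancel.symm
      measurableSet_Iic)
  have := gaussDens_ne_zero hσ x
  have hx0 : x ≠ 0 := (by linarith : x < 0).ne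
  rw [tildeF, tildeF, if_neg (by linarith), if_neg (by linarith), ← integral_Iic_eq_integral_Iio,
    ← integral_Iic_eq_integral_Iio, hIBP, setIntegral_congr_fun measurableSet_Iic hcancel]
  field_simp
  ring

end LambdaSolution

/-- With `Λ(h)(x) = (h(x)/x)'`, if `h` is differentiable on `ℝ \ (−1,1)` with
`h, h' ∈ E_σ`, then `f̃_h'(x) = x · f̃_{Λ(h)}(x)` for all `|x| ≥ 1`. -/
theorem stmt_17 (σ : ℝ) (hσ : 0 < σ) (h : ℝ → ℝ)
    (hdiff : ∀ x : ℝ, 1 ≤ |x| → DifferentiableAt ℝ h x)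
    (hh : memEsig σ h) (hh' : memEsig σ (deriv h)) :
    ∀ x : ℝ, 1 ≤ |x| →
      deriv (tildeF σ h) x = x * tildeF σ (deriv fun y => h y / y) x := by
  intro x hx
  have hc := (hdiff x hx).continuousAt
  have hint := integrableOn_mul_gaussDens_of_memEsig hh
  rcases le_abs'.1 hx with hx' | hx'
  · have hS := Iio_subset_Iic_self.trans (Iic_subset_one_le_abs hx')
    rw [(hasDerivAt_tildeF_of_neg hσ.ne' (by linarith) hh.1 hc (hint.mono_set hS)).deriv,
      mul_tildeF_deriv_div_id_of_le_neg_one hσ.ne' hdiff hh hh' hx']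
  · have hS := Ioi_subset_Ici_self.trans (Ici_subset_one_le_abs hx')
    rw [(hasDerivAt_tildeF_of_pos hσ.ne' (by linarith) hh.1 hc (hint.mono_set hS)).deriv,
      mul_tildeF_deriv_div_id_of_one_le hσ.ne' hdiff hh hh' hx']
end
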